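/- arXiv:2111.03805 — 6 statements merged into one kernel-verified Lean document; each statement's English description precedes it below -/
import Mathlib

section
/- Let d > 0 and r1, r2 > 0 with r1 + r2 < d. Then the equation cosh(x)/cosh(r1) = cosh(d - x)/cosh(r2) has exactly one solution x in the real line, and this solution satisfies r1 < x < d - r2. -/
/-! Writing `cosh x / a - cosh (d - x) / b = A eˣ + B e⁻ˣ`, the coefficients satisfy `A > 0 > B`
exactly when `e⁻ᵈ < b / a < eᵈ`. For `a = cosh r₁`, `b = cosh r₂` this follows from
`cosh r₂ ≤ e^|r₂ - r₁| cosh r₁` and `|r₂ - r₁| < d`, so the difference of the two potentials is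
strictly increasing. It is negative on the first circle and positive on the second, so it has
exactly one zero, and that zero lies between the circles. -/

open Real Set

theorem Real.cosh_le_exp_abs_sub_mul_cosh (x y : ℝ) : cosh y ≤ exp |y - x| * cosh x := by
  have h₁ : exp y ≤ exp (|y - x| + x) := exp_le_exp.2 (by linarith [le_abs_self (y - x)])
  have h₂ : exp (-y) ≤ exp (|y - x| + -x) := exp_le_exp.2 (by linarith [neg_abs_le (y - x)])
  rw [exp_add] at h₁ h₂
  rw [cosh_eq, cosh_eq]
  linarith

theorem strictMono_mul_exp_add_mul_exp_neg {A B : ℝ} (hA : 0 < A) (hB : B ≤ 0) :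
    StrictMono fun x => A * exp x + B * exp (-x) := by
  intro x y hxy
  have h₁ : A * exp x < A * exp y := mul_lt_mul_of_pos_left (exp_lt_exp.2 hxy) hA
  have h₂ : B * exp (-x) ≤ B * exp (-y) :=
    mul_le_mul_of_nonpos_left (exp_le_exp.2 (neg_le_neg hxy.le)) hB
  exact add_lt_add_of_lt_of_le h₁ h₂

theorem strictMono_cosh_div_sub_cosh_sub_div {a b d : ℝ} (ha : 0 < a) (hb : 0 < b)
    (hab : a < exp d * b) (hba : b < exp d * a) :
    StrictMono fun x => cosh x / a - cosh (d - x) / b := by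
  have hexp : (fun x => cosh x / a - cosh (d - x) / b) = fun x =>
      ((exp d * b - a) / (2 * a * b * exp d)) * exp x +
        ((b - exp d * a) / (2 * a * b)) * exp (-x) := by
    funext x
    rw [cosh_eq, cosh_eq, neg_sub, exp_sub, exp_sub, exp_neg]
    field_simp
    ring
  rw [hexp]
  apply strictMono_mul_exp_add_mul_exp_neg
  · exact div_pos (by linarith) (by positivity)
  · exact div_nonpos_of_nonpos_of_nonneg (by linarith) (by positivity)

theorem StrictMono.existsUnique_eq_and_mem_Ioo {f : ℝ → ℝ} (hf : StrictMono f)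
    (hcont : Continuous f) {a b c : ℝ} (ha : f a < c) (hb : c < f b) :
    (∃! x, f x = c) ∧ ∀ x, f x = c → x ∈ Ioo a b := by
  have hmem : ∀ x, f x = c → x ∈ Ioo a b := fun x hx =>
    ⟨hf.lt_iff_lt.1 (hx ▸ ha), hf.lt_iff_lt.1 (hx ▸ hb)⟩
  have hab : a ≤ b := (hf.lt_iff_lt.1 (ha.trans hb)).le
  obtain ⟨x, -, hx⟩ := intermediate_value_Ioo hab hcont.continuousOn ⟨ha, hb⟩
  exact ⟨⟨x, hx, fun y hy => hf.injective (hy.trans hx.symm)⟩, hmem⟩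

theorem existsUnique_hyperbolic_equipotential_general
    (d r1 r2 : ℝ) (hr1 : 0 < r1) (hr2 : 0 < r2)
    (hdisj : r1 + r2 < d) :
    (∃! x : ℝ, Real.cosh x / Real.cosh r1 = Real.cosh (d - x) / Real.cosh r2) ∧
    ∀ x : ℝ, Real.cosh x / Real.cosh r1 = Real.cosh (d - x) / Real.cosh r2 →
      x ∈ Set.Ioo r1 (d - r2) := by
  have hc1 := cosh_pos r1
  have hc2 := cosh_pos r2
  have hdist : |r2 - r1| < d := abs_sub_lt_iff.2 ⟨by linarith, by linarith⟩
  have hmono := strictMono_cosh_div_sub_cosh_sub_div hc1 hc2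
    ((cosh_le_exp_abs_sub_mul_cosh r2 r1).trans_lt
      (mul_lt_mul_of_pos_right (exp_lt_exp.2 (abs_sub_comm r1 r2 ▸ hdist)) hc2))
    ((cosh_le_exp_abs_sub_mul_cosh r1 r2).trans_lt
      (mul_lt_mul_of_pos_right (exp_lt_exp.2 hdist) hc1))
  have hcont : Continuous fun x => cosh x / cosh r1 - cosh (d - x) / cosh r2 := by fun_prop
  have hfirst : cosh r2 < cosh (d - r1) :=
    cosh_lt_cosh.2 (by rw [abs_of_pos hr2, abs_of_pos (by linarith)]; linarith)
  have hsecond : cosh r1 < cosh (d - r2) :=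
    cosh_lt_cosh.2 (by rw [abs_of_pos hr1, abs_of_pos (by linarith)]; linarith)
  simp_rw [← sub_eq_zero (a := cosh _ / cosh r1)]
  refine hmono.existsUnique_eq_and_mem_Ioo hcont ?_ ?_
  · rw [div_self hc1.ne', sub_neg, one_lt_div hc2]
    exact hfirst
  · rw [sub_sub_cancel, div_self hc2.ne', sub_pos, one_lt_div hc1]
    exact hsecond

/-- Existence and uniqueness of the equipotential point between two disjoint
circles in the hyperbolic plane whose centers are at distance `d`, with radii
`r1` and `r2`; the unique solution lies strictly between the circles. -/
theorem existsUnique_hyperbolic_equipotential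
    (d r1 r2 : ℝ) (hd : 0 < d) (hr1 : 0 < r1) (hr2 : 0 < r2)
    (hdisj : r1 + r2 < d) :
    (∃! x : ℝ, Real.cosh x / Real.cosh r1 = Real.cosh (d - x) / Real.cosh r2) ∧
    ∀ x : ℝ, Real.cosh x / Real.cosh r1 = Real.cosh (d - x) / Real.cosh r2 →
      x ∈ Set.Ioo r1 (d - r2) :=
  existsUnique_hyperbolic_equipotential_general d r1 r2 hr1 hr2 hdisj
end

section
/- Let C be a compact strictly convex body in the Euclidean plane. If for every exterior point S the two tangent segments from S to C have equal length (i.e., every cap of C is isosceles), then C is a closed disc. -/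
/-!
For a unit vector `u` let `T u` be the point of `C` where `⟪·, u⟫` is maximal; it is unique by
strict convexity. For non-parallel `u₁, u₂` the tangent lines at `T u₁` and `T u₂` meet at a
point `S` outside `C`, and equality of the two tangent lengths from `S` forces `T u₁ - T u₂` to
be orthogonal to `u₁ + u₂`, like `u₁ - u₂`; in the plane this makes
`T u₁ - T u₂ = ρ • (u₁ - u₂)`. Three distinct points of the unit circle are never collinear, so
`ρ` is one constant `r` for all pairs, whence `T u = O + r • u` for every unit `u`: the circle of
centre `O` and radius `r` lies in `C`, and `C` lies in each of its tangent half-planes.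
-/

open scoped RealInnerProductSpace

/-- The line through `S` and `P` is a supporting (tangent) line of the convex
body `C`, touching it at `P`. -/
def IsTangentAt (C : Set (EuclideanSpace ℝ (Fin 2)))
    (S P : EuclideanSpace ℝ (Fin 2)) : Prop :=
  P ∈ C ∧ ∃ f : EuclideanSpace ℝ (Fin 2) →ₗ[ℝ] ℝ,
    f ≠ 0 ∧ f S = f P ∧ ∀ x ∈ C, f x ≤ f P

open Metric Module

section InnerProductSpace

variable {E : Type*} [NormedAddCommGroup E] [InnerProductSpace ℝ E]

theorem StrictConvex.eq_of_isMaxOn_inner {C : Set E} (hC : StrictConvex ℝ C) {u P Q : E}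
    (hu : u ≠ 0) (hP : P ∈ C) (hQ : Q ∈ C) (hmax : IsMaxOn (⟪·, u⟫) C P)
    (hQP : ⟪Q, u⟫ = ⟪P, u⟫) : Q = P := by
  by_contra hne
  set m : E := (1 / 2 : ℝ) • Q + (1 / 2 : ℝ) • P
  have hm : m ∈ interior C := hC hQ hP hne (by norm_num) (by norm_num) (by norm_num)
  -- the nonzero functional `⟪·, u⟫` would have a local maximum at the interior point `m`
  have hloc : IsLocalMax (⟪·, u⟫) m := by
    filter_upwards [mem_interior_iff_mem_nhds.1 hm] with x hx
    calc ⟪x, u⟫ ≤ ⟪P, u⟫ := hmax hx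
      _ = ⟪m, u⟫ := by simp only [m, inner_add_left, real_inner_smul_left, hQP]; ring
  have hfun : (⟪·, u⟫) = ⇑(innerSL ℝ u) := funext fun x => real_inner_comm _ _
  rw [hfun] at hloc
  have h0 := congrArg (· u) (hloc.hasFDerivAt_eq_zero (innerSL ℝ u).hasFDerivAt)
  simp [hu] at h0

theorem exists_inner_eq_inner_eq {u₁ u₂ : E} (hu₁ : ‖u₁‖ = 1) (hu₂ : ‖u₂‖ = 1) (h : u₁ ≠ u₂)
    (h' : u₁ ≠ -u₂) (a₁ a₂ : ℝ) : ∃ S : E, ⟪S, u₁⟫ = a₁ ∧ ⟪S, u₂⟫ = a₂ := by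
  have hc₁ : ⟪u₁, u₂⟫ < 1 := (inner_lt_one_iff_real_of_norm_eq_one hu₁ hu₂).2 h
  have hc₂ : -1 < ⟪u₁, u₂⟫ := lt_of_le_of_ne (neg_one_le_real_inner_of_norm_eq_one hu₁ hu₂)
    fun hc => h' ((inner_eq_neg_one_iff_of_norm_eq_one hu₁ hu₂).1 hc.symm)
  have hd : 1 - ⟪u₁, u₂⟫ ^ 2 ≠ 0 := by nlinarith
  refine ⟨((a₁ - a₂ * ⟪u₁, u₂⟫) / (1 - ⟪u₁, u₂⟫ ^ 2)) • u₁ +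
    ((a₂ - a₁ * ⟪u₁, u₂⟫) / (1 - ⟪u₁, u₂⟫ ^ 2)) • u₂, ?_, ?_⟩ <;>
  · simp only [inner_add_left, real_inner_smul_left, real_inner_self_eq_norm_sq, hu₁, hu₂,
      real_inner_comm u₁ u₂]
    field_simp
    ring

theorem Convex.eq_closedBall_of_isMaxOn_inner [Nontrivial E] {C : Set E} (hC : Convex ℝ C)
    {O : E} {r : ℝ} (hmem : ∀ u : E, ‖u‖ = 1 → O + r • u ∈ C)
    (hmax : ∀ u : E, ‖u‖ = 1 → IsMaxOn (⟪·, u⟫) C (O + r • u)) : C = closedBall O r := by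
  obtain ⟨e, he⟩ := exists_norm_eq E zero_le_one
  have hr : 0 ≤ r := by
    have : ⟪O + r • -e, e⟫ ≤ ⟪O + r • e, e⟫ := hmax e he (hmem (-e) (by rwa [norm_neg]))
    simp only [inner_add_left, real_inner_smul_left, inner_neg_left, real_inner_self_eq_norm_sq,
      he] at this
    linarith
  refine subset_antisymm (fun x hx => ?_) ?_
  · rw [mem_closedBall, dist_eq_norm]
    rcases eq_or_ne x O with rfl | hxO
    · simpa using hr
    set u := ‖x - O‖⁻¹ • (x - O)
    have hu : ‖u‖ = 1 := norm_smul_inv_norm (sub_ne_zero.2 hxO)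
    have hxu : ⟪x - O, u⟫ = ‖x - O‖ := by
      rw [real_inner_smul_right, real_inner_self_eq_norm_sq]
      field_simp [norm_ne_zero_iff.2 (sub_ne_zero.2 hxO)]
    have : ⟪x, u⟫ ≤ ⟪O + r • u, u⟫ := hmax u hu hx
    simp only [inner_add_left, real_inner_smul_left, real_inner_self_eq_norm_sq, hu] at this
    rw [inner_sub_left] at hxu
    linarith
  · rw [← convexHull_sphere_eq_closedBall O hr]
    refine convexHull_min (fun y hy => ?_) hC
    rw [mem_sphere, dist_eq_norm] at hy
    rcases eq_or_ne y O with rfl | hyO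
    · simpa [← hy] using hmem e he
    have hu : ‖‖y - O‖⁻¹ • (y - O)‖ = 1 := norm_smul_inv_norm (sub_ne_zero.2 hyO)
    convert hmem _ hu using 1
    rw [← hy, smul_smul, mul_inv_cancel₀ (norm_ne_zero_iff.2 (sub_ne_zero.2 hyO)), one_smul,
      add_sub_cancel]

theorem eq_of_smul_sub_add_smul_sub_eq_smul_sub {u v w : E} (hu : ‖u‖ = 1) (hv : ‖v‖ = 1)
    (hw : ‖w‖ = 1) (huv : u ≠ v) (huw : u ≠ w) (hvw : v ≠ w) {a b c : ℝ}
    (h : a • (u - v) + b • (v - w) = c • (u - w)) : a = c ∧ b = c := by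
  have h' : (a - c) • (u - v) = (c - b) • (v - w) := by
    rw [← sub_eq_zero] at h ⊢; rw [← h]; module
  have hac : a = c := by
    by_contra hac
    have hind : AffineIndependent ℝ ![u, v, w] :=
      EuclideanGeometry.Cospherical.affineIndependent_of_ne ⟨0, 1, by simp [hu, hv, hw]⟩
        huv huw hvw
    refine affineIndependent_iff_not_collinear_set.1 hind
      (collinear_insert_of_mem_affineSpan_pair ?_)
    have hu' : u - v = ((c - b) / (a - c)) • (v - w) := by
      rw [div_eq_inv_mul, mul_smul, ← h', smul_smul, inv_mul_cancel₀ (sub_ne_zero.2 hac),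
        one_smul]
    convert smul_vsub_vadd_mem_affineSpan_pair ((b - c) / (a - c)) v w using 1
    rw [vsub_eq_sub, vadd_eq_add, eq_add_of_sub_eq hu']
    module
  refine ⟨hac, ?_⟩
  rw [hac, sub_self, zero_smul, eq_comm, smul_eq_zero, sub_eq_zero, sub_eq_zero] at h'
  exact (h'.resolve_right hvw).symm

theorem exists_norm_eq_one_forall_ne (hE : 1 < Module.rank ℝ E) (s : Finset E) :
    ∃ w : E, ‖w‖ = 1 ∧ ∀ v ∈ s, v ≠ w ∧ v ≠ -w := by
  classical
  have : Nontrivial E := rank_pos_iff_nontrivial.1 (zero_lt_one.trans hE)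
  obtain ⟨e, he⟩ := exists_norm_eq E zero_le_one
  have hinf : (sphere (0 : E) 1).Infinite :=
    (isConnected_sphere hE 0 zero_le_one).isPreconnected.infinite_of_nontrivial
      ⟨e, by simpa using he, -e, by simpa using he, fun h => by
        have := congrArg (⟪e, ·⟫) h
        norm_num [real_inner_self_eq_norm_sq, he] at this⟩
  obtain ⟨w, hw, hws⟩ := hinf.exists_notMem_finset (s ∪ s.image (-·))
  simp only [Finset.mem_union, Finset.mem_image, not_or, not_exists, not_and] at hws
  exact ⟨w, by simpa using hw, fun v hv =>
    ⟨fun h => hws.1 (h ▸ hv), fun h => hws.2 v hv (by rw [h, neg_neg])⟩⟩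

variable {T : E → E}

theorem sub_eq_smul_sub_of_sub_eq_smul_sub
    (hT : ∀ u v : E, ‖u‖ = 1 → ‖v‖ = 1 → u ≠ v → u ≠ -v → ∃ ρ : ℝ, T u - T v = ρ • (u - v))
    {u v w : E} (hu : ‖u‖ = 1) (hv : ‖v‖ = 1) (hw : ‖w‖ = 1) (huv : u ≠ v) (huw : u ≠ w)
    (huw' : u ≠ -w) (hvw : v ≠ w) (hvw' : v ≠ -w) {a : ℝ} (h : T u - T v = a • (u - v)) :
    T u - T w = a • (u - w) ∧ T v - T w = a • (v - w) := by
  obtain ⟨b, hb⟩ := hT v w hv hw hvw hvw'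
  obtain ⟨c, hc⟩ := hT u w hu hw huw huw'
  obtain ⟨rfl, rfl⟩ := eq_of_smul_sub_add_smul_sub_eq_smul_sub hu hv hw huv huw hvw
    (by rw [← h, ← hb, ← hc]; abel)
  exact ⟨hc, hb⟩

theorem exists_eq_add_smul_of_forall_exists_sub_eq_smul_sub (hE : 1 < Module.rank ℝ E)
    (hT : ∀ u v : E, ‖u‖ = 1 → ‖v‖ = 1 → u ≠ v → u ≠ -v → ∃ ρ : ℝ, T u - T v = ρ • (u - v)) :
    ∃ (O : E) (r : ℝ), ∀ u, ‖u‖ = 1 → T u = O + r • u := by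
  classical
  obtain ⟨e, he, -⟩ := exists_norm_eq_one_forall_ne hE ∅
  obtain ⟨f, hf, hef⟩ := exists_norm_eq_one_forall_ne hE {e}
  simp only [Finset.mem_singleton, forall_eq] at hef
  obtain ⟨r, hr⟩ := hT e f he hf hef.1 hef.2
  refine ⟨T e - r • e, r, fun u hu => ?_⟩
  -- carry the ratio `r` of the pair `(e, f)` over to `u` through two auxiliary directions
  obtain ⟨w₁, hw₁, h₁⟩ := exists_norm_eq_one_forall_ne hE {e, f, u}
  obtain ⟨w₂, hw₂, h₂⟩ := exists_norm_eq_one_forall_ne hE {e, f, u, w₁}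
  simp only [Finset.mem_insert, Finset.mem_singleton, forall_eq_or_imp, forall_eq] at h₁ h₂
  obtain ⟨⟨hew₁, hew₁'⟩, ⟨hfw₁, hfw₁'⟩, huw₁, huw₁'⟩ := h₁
  obtain ⟨⟨hew₂, hew₂'⟩, -, ⟨huw₂, huw₂'⟩, hw₁w₂, hw₁w₂'⟩ := h₂
  have e₁ : T e - T w₁ = r • (e - w₁) :=
    (sub_eq_smul_sub_of_sub_eq_smul_sub hT he hf hw₁ hef.1 hew₁ hew₁' hfw₁ hfw₁' hr).1
  have e₂ : T w₁ - T w₂ = r • (w₁ - w₂) :=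
    (sub_eq_smul_sub_of_sub_eq_smul_sub hT he hw₁ hw₂ hew₁ hew₂ hew₂' hw₁w₂ hw₁w₂' e₁).2
  have e₃ : T w₁ - T u = r • (w₁ - u) :=
    (sub_eq_smul_sub_of_sub_eq_smul_sub hT hw₁ hw₂ hu hw₁w₂ huw₁.symm
      (fun h => huw₁' (by rw [h, neg_neg])) huw₂.symm (fun h => huw₂' (by rw [h, neg_neg])) e₂).1
  linear_combination (norm := module) -e₁ - e₃

section Plane

variable [Fact (finrank ℝ E = 2)]

theorem inner_sq_add_norm_sq_mul_inner_sq {u v : E} (w : E) (hu : ‖u‖ = 1) (hv : ⟪v, u⟫ = 0) :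
    ⟪v, w⟫ ^ 2 + ‖v‖ ^ 2 * ⟪u, w⟫ ^ 2 = ‖v‖ ^ 2 * ‖w‖ ^ 2 := by
  rcases eq_or_ne v 0 with rfl | hv0
  · simp
  have hu0 : u ≠ 0 := by rintro rfl; simp at hu
  obtain ⟨c, hc⟩ := Submodule.mem_span_singleton.1 <|
    Submodule.mem_span_singleton_of_inner_eq_zero_of_inner_eq_zero (𝕜 := ℝ)
      (u := w - ⟪u, w⟫ • u) hu0 hv0
      (by simp [inner_sub_right, real_inner_smul_right, hu])
      (by rw [real_inner_comm, hv])
  rw [eq_sub_iff_add_eq] at hc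
  generalize ⟪u, w⟫ = a at hc
  subst hc
  rw [← real_inner_self_eq_norm_sq (c • v + a • u)]
  simp only [inner_add_right, inner_add_left, real_inner_smul_left, real_inner_smul_right,
    real_inner_self_eq_norm_sq, norm_smul, Real.norm_eq_abs, mul_pow, sq_abs, hu, hv,
    real_inner_comm v u]
  ring

theorem exists_sub_eq_smul_sub_of_norm_eq {u₁ u₂ v₁ v₂ : E} (hu₁ : ‖u₁‖ = 1) (hu₂ : ‖u₂‖ = 1)
    (hv₁ : ⟪v₁, u₁⟫ = 0) (hv₂ : ⟪v₂, u₂⟫ = 0) (hv : ‖v₁‖ = ‖v₂‖)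
    (h₁₂ : ⟪v₁, u₂⟫ < 0) (h₂₁ : ⟪v₂, u₁⟫ < 0) : ∃ ρ : ℝ, v₁ - v₂ = ρ • (u₁ - u₂) := by
  have hsq : ⟪v₁, u₂⟫ ^ 2 = ⟪v₂, u₁⟫ ^ 2 := by
    have h₁ := inner_sq_add_norm_sq_mul_inner_sq u₂ hu₁ hv₁
    have h₂ := inner_sq_add_norm_sq_mul_inner_sq u₁ hu₂ hv₂
    rw [hu₁, hu₂, hv, real_inner_comm u₁ u₂] at *
    linarith
  have heq : ⟪v₁, u₂⟫ = ⟪v₂, u₁⟫ := by nlinarith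
  have hsum : u₁ + u₂ ≠ 0 := by
    intro h
    rw [add_eq_zero_iff_eq_neg.1 h, inner_neg_right, neg_eq_zero] at hv₁
    exact h₁₂.ne hv₁
  have hdiff : u₁ - u₂ ≠ 0 := by
    intro h
    rw [sub_eq_zero.1 h] at hv₁
    exact h₁₂.ne hv₁
  obtain ⟨ρ, hρ⟩ := Submodule.mem_span_singleton.1 <|
    Submodule.mem_span_singleton_of_inner_eq_zero_of_inner_eq_zero (𝕜 := ℝ) (u := v₁ - v₂)
      hsum hdiff
      (by
        simp only [inner_sub_right, inner_add_right, real_inner_comm v₁, real_inner_comm v₂, hv₁,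
          hv₂, heq]
        ring)
      (by
        simp only [inner_sub_right, inner_add_left, real_inner_self_eq_norm_sq, hu₁, hu₂,
          real_inner_comm u₁ u₂]
        ring)
  exact ⟨ρ, hρ.symm⟩

end Plane

end InnerProductSpace

theorem isTangentAt_of_isMaxOn_inner {C : Set (EuclideanSpace ℝ (Fin 2))}
    {u S P : EuclideanSpace ℝ (Fin 2)} (hu : u ≠ 0) (hP : P ∈ C) (hmax : IsMaxOn (⟪·, u⟫) C P)
    (hS : ⟪S, u⟫ = ⟪P, u⟫) : IsTangentAt C S P := by
  refine ⟨hP, innerSL ℝ u, fun h => hu ?_, ?_, fun x hx => ?_⟩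
  · simpa using congrArg (· u) h
  · simpa [real_inner_comm u] using hS
  · simpa [real_inner_comm u] using hmax hx

theorem sub_eq_smul_sub_of_isMaxOn_inner {C : Set (EuclideanSpace ℝ (Fin 2))}
    (hC : StrictConvex ℝ C)
    (hiso : ∀ S ∉ C, ∀ P Q : EuclideanSpace ℝ (Fin 2),
      IsTangentAt C S P → IsTangentAt C S Q → dist S P = dist S Q)
    {u₁ u₂ P₁ P₂ : EuclideanSpace ℝ (Fin 2)} (hu₁ : ‖u₁‖ = 1) (hu₂ : ‖u₂‖ = 1) (h : u₁ ≠ u₂)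
    (h' : u₁ ≠ -u₂) (hP₁ : P₁ ∈ C) (hP₂ : P₂ ∈ C) (hmax₁ : IsMaxOn (⟪·, u₁⟫) C P₁)
    (hmax₂ : IsMaxOn (⟪·, u₂⟫) C P₂) : ∃ ρ : ℝ, P₁ - P₂ = ρ • (u₁ - u₂) := by
  have : Fact (finrank ℝ (EuclideanSpace ℝ (Fin 2)) = 2) := ⟨finrank_euclideanSpace_fin⟩
  rcases eq_or_ne P₁ P₂ with rfl | hne
  · exact ⟨0, by simp⟩
  have hu₁0 : u₁ ≠ 0 := by rintro rfl; simp at hu₁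
  have hu₂0 : u₂ ≠ 0 := by rintro rfl; simp at hu₂
  -- `S` is the intersection of the tangent lines at `P₁` and `P₂`
  obtain ⟨S, hS₁, hS₂⟩ := exists_inner_eq_inner_eq hu₁ hu₂ h h' ⟪P₁, u₁⟫ ⟪P₂, u₂⟫
  have hlt₁ : ⟪P₂, u₁⟫ < ⟪P₁, u₁⟫ := lt_of_le_of_ne (hmax₁ hP₂) fun h =>
    hne (hC.eq_of_isMaxOn_inner hu₁0 hP₁ hP₂ hmax₁ h).symm
  have hlt₂ : ⟪P₁, u₂⟫ < ⟪P₂, u₂⟫ := lt_of_le_of_ne (hmax₂ hP₁) fun h =>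
    hne (hC.eq_of_isMaxOn_inner hu₂0 hP₂ hP₁ hmax₂ h)
  have hS : S ∉ C := fun hS => hne <|
    (hC.eq_of_isMaxOn_inner hu₁0 hP₁ hS hmax₁ hS₁).symm.trans
      (hC.eq_of_isMaxOn_inner hu₂0 hP₂ hS hmax₂ hS₂)
  have hdist : dist S P₁ = dist S P₂ := hiso S hS P₁ P₂
    (isTangentAt_of_isMaxOn_inner hu₁0 hP₁ hmax₁ hS₁)
    (isTangentAt_of_isMaxOn_inner hu₂0 hP₂ hmax₂ hS₂)
  obtain ⟨ρ, hρ⟩ := exists_sub_eq_smul_sub_of_norm_eq (v₁ := P₁ - S) (v₂ := P₂ - S) hu₁ hu₂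
    (by rw [inner_sub_left, hS₁, sub_self]) (by rw [inner_sub_left, hS₂, sub_self])
    (by rw [← dist_eq_norm, ← dist_eq_norm, dist_comm, hdist, dist_comm])
    (by rw [inner_sub_left, hS₂]; linarith) (by rw [inner_sub_left, hS₁]; linarith)
  exact ⟨ρ, by rw [← hρ, sub_sub_sub_cancel_right]⟩

theorem strictlyConvex_isosceles_caps_imp_disc_general
    (C : Set (EuclideanSpace ℝ (Fin 2)))
    (hcomp : IsCompact C)
    (hint : (interior C).Nonempty) (hstrict : StrictConvex ℝ C)
    (hiso : ∀ S ∉ C, ∀ P Q : EuclideanSpace ℝ (Fin 2),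
      IsTangentAt C S P → IsTangentAt C S Q → dist S P = dist S Q) :
    ∃ (O : EuclideanSpace ℝ (Fin 2)) (r : ℝ), 0 < r ∧
      C = Metric.closedBall O r := by
  choose T hTC hTmax using fun u : EuclideanSpace ℝ (Fin 2) =>
    hcomp.exists_isMaxOn (f := (⟪·, u⟫)) (hint.mono interior_subset) (by fun_prop)
  obtain ⟨O, r, hT⟩ := exists_eq_add_smul_of_forall_exists_sub_eq_smul_sub
    (by rw [← finrank_eq_rank, finrank_euclideanSpace_fin]; norm_num)
    fun u v hu hv h h' =>
      sub_eq_smul_sub_of_isMaxOn_inner hstrict hiso hu hv h h' (hTC u) (hTC v) (hTmax u) (hTmax v)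
  have hC : C = closedBall O r := hstrict.convex.eq_closedBall_of_isMaxOn_inner
    (fun u hu => hT u hu ▸ hTC u) (fun u hu => hT u hu ▸ hTmax u)
  refine ⟨O, r, ?_, hC⟩
  rwa [hC, interior_closedBall', nonempty_ball] at hint

/-- If every cap of a compact strictly convex body `C` in the plane is
isosceles (the two tangent segments from any exterior point have equal
length), then `C` is a closed disc. -/
theorem strictlyConvex_isosceles_caps_imp_disc
    (C : Set (EuclideanSpace ℝ (Fin 2)))
    (hcomp : IsCompact C) (hconv : Convex ℝ C)
    (hint : (interior C).Nonempty) (hstrict : StrictConvex ℝ C)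
    (hiso : ∀ S ∉ C, ∀ P Q : EuclideanSpace ℝ (Fin 2),
      IsTangentAt C S P → IsTangentAt C S Q → dist S P = dist S Q) :
    ∃ (O : EuclideanSpace ℝ (Fin 2)) (r : ℝ), 0 < r ∧
      C = Metric.closedBall O r :=
  strictlyConvex_isosceles_caps_imp_disc_general C hcomp hint hstrict hiso
end

section
/- Let C be a compact convex body in the Euclidean plane and let α ∈ (0, π). Then there exists a cap of C with angle α that is isosceles: there exist an exterior point S and two supporting lines of C through S touching C at points P and Q respectively, such that the angle of the cap at S equals α and |SP| = |SQ|. -/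
open scoped RealInnerProductSpace

/-!
A cap of angle `α` is determined by the direction `θ` of the outer normal of its first supporting
line; the second one has normal `θ + α`, and the apex `S(θ)` is their intersection. The touching
points on either line form a segment (a face of `C`), so the attainable values of `|SP|` and of
`|SQ|` form two intervals, and there is an isosceles cap at `θ` exactly when `S(θ) ∉ C` and these
intervals overlap, i.e. when neither `gapPQ θ` nor `gapQP θ` is positive.

Both gaps are lower semicontinuous in `θ`. Averaging `gapPQ` over a fine grid of directions, the
support-function terms cancel up to `O(1)` by periodicity, and each `faceMax` is bounded below by a
difference quotient of the support function; hence `gapPQ ≤ 0` somewhere in every period. As `C`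
has interior points, `S(θ₀) ∉ C` for some `θ₀`; say `gapPQ θ₀ > 0`. Let `θ₂` be the last direction
before `θ₀` with `S(θ₂) ∈ C` or `gapPQ θ₂ ≤ 0`. If `S(θ₂) ∈ C`, it is a corner of `C` supported by
every normal between `θ₂` and `θ₂ + α`, in particular by the bisecting normal of the caps just after
`θ₂`, and this forces `gapPQ ≤ 0` there. So `S(θ₂) ∉ C` and `gapPQ θ₂ ≤ 0`, and `gapQP θ₂ ≤ 0`
because the two gaps are never positive at the same time. The case `gapQP θ₀ > 0` is the mirror
image: reflecting `C` in a line exchanges the roles of `P` and `Q`.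
-/

open Real Set Filter Topology

local notation "ℝ²" => EuclideanSpace ℝ (Fin 2)

noncomputable section

namespace PlaneCap

def dir (θ : ℝ) : ℝ² := !₂[cos θ, sin θ]

def dirPerp (θ : ℝ) : ℝ² := dir (θ + π / 2)

theorem inner_dir_dir (a b : ℝ) : ⟪dir a, dir b⟫ = cos (b - a) := by
  simp [dir, PiLp.inner_apply, Fin.sum_univ_two, cos_sub]

theorem inner_dirPerp_dir (a b : ℝ) : ⟪dirPerp a, dir b⟫ = sin (b - a) := by
  rw [dirPerp, inner_dir_dir, sub_add_eq_sub_sub, cos_sub_pi_div_two]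

theorem inner_dir_dirPerp (a b : ℝ) : ⟪dir a, dirPerp b⟫ = -sin (b - a) := by
  rw [dirPerp, inner_dir_dir, add_sub_right_comm, cos_add_pi_div_two]

theorem inner_dirPerp_dirPerp (a b : ℝ) : ⟪dirPerp a, dirPerp b⟫ = cos (b - a) := by
  rw [dirPerp, dirPerp, inner_dir_dir, add_sub_add_right_eq_sub]

@[simp]
theorem norm_dir (θ : ℝ) : ‖dir θ‖ = 1 := by
  rw [norm_eq_sqrt_real_inner, inner_dir_dir, sub_self, cos_zero, sqrt_one]

@[simp]
theorem norm_dirPerp (θ : ℝ) : ‖dirPerp θ‖ = 1 :=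
  norm_dir _

theorem dir_add_pi (θ : ℝ) : dir (θ + π) = -dir θ := by
  ext i; fin_cases i <;> simp [dir]

theorem periodic_dir : Function.Periodic dir (2 * π) := by
  intro θ; simp [dir]

@[fun_prop]
theorem continuous_dir : Continuous dir :=
  (PiLp.continuous_toLp 2 _).comp <| continuous_pi fun i => by
    fin_cases i
    exacts [continuous_cos, continuous_sin]

@[fun_prop]
theorem continuous_dirPerp : Continuous dirPerp :=
  continuous_dir.comp (continuous_add_const _)

theorem eq_inner_dir_smul_add (θ : ℝ) (x : ℝ²) :
    x = ⟪dir θ, x⟫ • dir θ + ⟪dirPerp θ, x⟫ • dirPerp θ := by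
  have h := sin_sq_add_cos_sq θ
  ext i; fin_cases i <;>
    simp [dir, dirPerp, PiLp.inner_apply, Fin.sum_univ_two, cos_add_pi_div_two,
      sin_add_pi_div_two] <;> linear_combination (-x _) * h

theorem sub_eq_inner_dirPerp_smul {θ : ℝ} {x y : ℝ²} (h : ⟪dir θ, x⟫ = ⟪dir θ, y⟫) :
    x - y = ⟪dirPerp θ, x - y⟫ • dirPerp θ := by
  conv_lhs => rw [eq_inner_dir_smul_add θ (x - y)]
  rw [inner_sub_right, h, sub_self, zero_smul, zero_add]

theorem norm_dir_sub_dir_le (a b : ℝ) : ‖dir a - dir b‖ ≤ |a - b| := by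
  have hsq : ‖dir a - dir b‖ ^ 2 ≤ |a - b| ^ 2 := by
    rw [norm_sub_sq_real, inner_dir_dir, norm_dir, norm_dir, sq_abs, ← cos_neg, neg_sub]
    nlinarith [one_sub_sq_div_two_le_cos (x := a - b)]
  exact (pow_le_pow_iff_left₀ (norm_nonneg _) (abs_nonneg _) two_ne_zero).1 hsq

theorem sin_smul_dir (β₁ β β₂ : ℝ) :
    sin (β₂ - β₁) • dir β = sin (β₂ - β) • dir β₁ + sin (β - β₁) • dir β₂ := by
  ext i; fin_cases i <;> simp [dir, sin_sub] <;> ring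

theorem dir_sub_add_dir_add (β γ : ℝ) : dir (β - γ) + dir (β + γ) = (2 * cos γ) • dir β := by
  ext i; fin_cases i <;> simp [dir, sin_sub, cos_sub, sin_add, cos_add] <;> ring

theorem inner_dir_eq_cos_add_sin (θ ψ : ℝ) (x : ℝ²) :
    ⟪dir ψ, x⟫ = ⟪dir θ, x⟫ * cos (ψ - θ) + ⟪dirPerp θ, x⟫ * sin (ψ - θ) := by
  conv_lhs => rw [eq_inner_dir_smul_add θ x]
  rw [inner_add_right, real_inner_smul_right, real_inner_smul_right, inner_dir_dir,
    inner_dir_dirPerp, ← neg_sub ψ θ, cos_neg, sin_neg]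
  ring

-- For `P`, `Q` on the lines through `S` with normals `dir θ`, `dir (θ + α)`, the signed difference
-- of the legs `|SP| - |SQ|` measures how far `Q` lies above `P` along the bisecting normal.
theorem inner_dirPerp_sub_mul_sin {θ α : ℝ} {S P Q : ℝ²} (hP : ⟪dir θ, P⟫ = ⟪dir θ, S⟫)
    (hQ : ⟪dir (θ + α), Q⟫ = ⟪dir (θ + α), S⟫) :
    (⟪dirPerp θ, S - P⟫ - ⟪dirPerp (θ + α), Q - S⟫) * sin α = ⟪dir θ + dir (θ + α), Q - P⟫ := by
  have hPS := sub_eq_inner_dirPerp_smul hP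
  have hQS := sub_eq_inner_dirPerp_smul hQ
  rw [show S - P = -(P - S) by abel, show Q - P = (Q - S) - (P - S) by abel, hPS, hQS]
  simp only [inner_neg_right, inner_sub_right, inner_add_left, real_inner_smul_right,
    inner_dir_dirPerp, inner_dirPerp_dirPerp, sub_self, cos_zero, sin_zero, add_sub_cancel_left,
    sub_add_cancel_left, sin_neg]
  ring

section Support

variable {C : Set ℝ²}

def support (C : Set ℝ²) (θ : ℝ) : ℝ := sSup ((⟪dir θ, ·⟫) '' C)

def face (C : Set ℝ²) (θ : ℝ) : Set ℝ² := {x ∈ C | ⟪dir θ, x⟫ = support C θ}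

/-- The face of `C` with outer normal `dir θ` is a segment on the supporting line;
`faceMin` and `faceMax` are the positions of its endpoints along `dirPerp θ`. -/
def faceMin (C : Set ℝ²) (θ : ℝ) : ℝ := sInf ((⟪dirPerp θ, ·⟫) '' face C θ)

def faceMax (C : Set ℝ²) (θ : ℝ) : ℝ := sSup ((⟪dirPerp θ, ·⟫) '' face C θ)

theorem continuous_inner_left (v : ℝ²) : Continuous (⟪v, ·⟫) :=
  continuous_const.inner continuous_id

theorem inner_le_support (hC : IsCompact C) {x : ℝ²} (hx : x ∈ C) (θ : ℝ) :
    ⟪dir θ, x⟫ ≤ support C θ :=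
  le_csSup (hC.image (continuous_inner_left _)).bddAbove (mem_image_of_mem _ hx)

theorem support_le (hne : C.Nonempty) {R : ℝ} (hR : ∀ x ∈ C, ‖x‖ ≤ R)
    (θ : ℝ) : support C θ ≤ R :=
  csSup_le (hne.image _) <| forall_mem_image.2 fun x hx =>
    (real_inner_le_norm _ _).trans (by rw [norm_dir, one_mul]; exact hR x hx)

theorem periodic_support : Function.Periodic (support C) (2 * π) := fun θ => by
  simp only [support, periodic_dir θ]

theorem continuous_support (hC : IsCompact C) : Continuous (support C) :=
  hC.continuous_sSup ((continuous_dir.comp continuous_fst).inner continuous_snd)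

theorem mem_face_iff (hC : IsCompact C) {θ : ℝ} {x : ℝ²} :
    x ∈ face C θ ↔ x ∈ C ∧ ∀ y ∈ C, ⟪dir θ, y⟫ ≤ ⟪dir θ, x⟫ :=
  ⟨fun hx => ⟨hx.1, fun _ hy => hx.2 ▸ inner_le_support hC hy θ⟩, fun hx =>
    ⟨hx.1, le_antisymm (inner_le_support hC hx.1 θ)
      (csSup_le ⟨_, mem_image_of_mem _ hx.1⟩ (forall_mem_image.2 hx.2))⟩⟩

theorem face_nonempty (hC : IsCompact C) (hne : C.Nonempty) (θ : ℝ) : (face C θ).Nonempty := by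
  obtain ⟨x, hx, hmax⟩ := (hC.image (continuous_inner_left (dir θ))).sSup_mem (hne.image _)
  exact ⟨x, hx, hmax⟩

theorem isCompact_face (hC : IsCompact C) (θ : ℝ) : IsCompact (face C θ) :=
  hC.inter_right (isClosed_eq (continuous_inner_left _) continuous_const)

theorem convex_face (hconv : Convex ℝ C) (θ : ℝ) : Convex ℝ (face C θ) :=
  hconv.inter ((convex_singleton (support C θ)).linear_preimage (innerₛₗ ℝ (dir θ)))

theorem le_faceMax (hC : IsCompact C) {θ : ℝ} {x : ℝ²} (hx : x ∈ face C θ) :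
    ⟪dirPerp θ, x⟫ ≤ faceMax C θ :=
  le_csSup ((isCompact_face hC θ).image (continuous_inner_left _)).bddAbove (mem_image_of_mem _ hx)

theorem faceMin_le (hC : IsCompact C) {θ : ℝ} {x : ℝ²} (hx : x ∈ face C θ) :
    faceMin C θ ≤ ⟪dirPerp θ, x⟫ :=
  csInf_le ((isCompact_face hC θ).image (continuous_inner_left _)).bddBelow (mem_image_of_mem _ hx)

theorem exists_faceMax (hC : IsCompact C) (hne : C.Nonempty) (θ : ℝ) :
    ∃ x ∈ face C θ, ⟪dirPerp θ, x⟫ = faceMax C θ :=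
  ((isCompact_face hC θ).image (continuous_inner_left _)).sSup_mem
    ((face_nonempty hC hne θ).image _)

theorem exists_faceMin (hC : IsCompact C) (hne : C.Nonempty) (θ : ℝ) :
    ∃ x ∈ face C θ, ⟪dirPerp θ, x⟫ = faceMin C θ :=
  ((isCompact_face hC θ).image (continuous_inner_left _)).sInf_mem
    ((face_nonempty hC hne θ).image _)

theorem faceMin_le_faceMax (hC : IsCompact C) (hne : C.Nonempty) (θ : ℝ) :
    faceMin C θ ≤ faceMax C θ := by
  obtain ⟨x, hx, -⟩ := exists_faceMax hC hne θ
  exact (faceMin_le hC hx).trans (le_faceMax hC hx)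

theorem Icc_subset_image_face (hC : IsCompact C) (hconv : Convex ℝ C) (hne : C.Nonempty)
    (θ : ℝ) : Icc (faceMin C θ) (faceMax C θ) ⊆ (⟪dirPerp θ, ·⟫) '' face C θ := by
  obtain ⟨x, hx, hxmin⟩ := exists_faceMin hC hne θ
  obtain ⟨y, hy, hymax⟩ := exists_faceMax hC hne θ
  rw [← hxmin, ← hymax]
  exact ((convex_face hconv θ).linear_image (innerₛₗ ℝ (dirPerp θ))).ordConnected.out
    (mem_image_of_mem _ hx) (mem_image_of_mem _ hy)

theorem support_ge_of_mem_face (hC : IsCompact C) {θ : ℝ} {x : ℝ²} (hx : x ∈ face C θ)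
    (ψ : ℝ) : support C θ * cos (ψ - θ) + ⟪dirPerp θ, x⟫ * sin (ψ - θ) ≤ support C ψ := by
  rw [← hx.2, ← inner_dir_eq_cos_add_sin]
  exact inner_le_support hC hx.1 ψ

theorem abs_support_sub_support_le (hC : IsCompact C) (hne : C.Nonempty) {R : ℝ}
    (hR : ∀ x ∈ C, ‖x‖ ≤ R) (a b : ℝ) : |support C a - support C b| ≤ R * |a - b| := by
  have key : ∀ a b, support C a - support C b ≤ R * |a - b| := fun a b => by
    obtain ⟨x, hx, hxa⟩ := face_nonempty hC hne a
    calc support C a - support C b ≤ ⟪dir a - dir b, x⟫ := by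
          rw [inner_sub_left, hxa]; linarith [inner_le_support hC hx b]
      _ ≤ |a - b| * R := (real_inner_le_norm _ _).trans <|
          mul_le_mul (norm_dir_sub_dir_le a b) (hR x hx) (norm_nonneg _) (abs_nonneg _)
      _ = R * |a - b| := mul_comm _ _
  exact abs_sub_le_iff.2 ⟨key a b, abs_sub_comm a b ▸ key b a⟩

theorem face_inter_face_subset (hC : IsCompact C) {β₁ β β₂ : ℝ} (hβ₁ : β₁ ≤ β) (hβ₂ : β ≤ β₂)
    (hπ : β₂ - β₁ < π) : face C β₁ ∩ face C β₂ ⊆ face C β := by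
  rintro z ⟨h₁, h₂⟩
  rcases hβ₁.eq_or_lt with rfl | hβ₁
  · exact h₁
  rw [mem_face_iff hC] at h₁ h₂ ⊢
  refine ⟨h₁.1, fun y hy => ?_⟩
  -- `dir β` is a nonnegative combination of `dir β₁` and `dir β₂`.
  have key := congrArg (⟪·, y - z⟫) (sin_smul_dir β₁ β β₂)
  simp only [inner_add_left, real_inner_smul_left] at key
  have hy₁ : ⟪dir β₁, y - z⟫ ≤ 0 := by rw [inner_sub_right]; linarith [h₁.2 y hy]
  have hy₂ : ⟪dir β₂, y - z⟫ ≤ 0 := by rw [inner_sub_right]; linarith [h₂.2 y hy]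
  have hs₁ : 0 ≤ sin (β₂ - β) := sin_nonneg_of_nonneg_of_le_pi (by linarith) (by linarith)
  have hs₂ : 0 ≤ sin (β - β₁) := sin_nonneg_of_nonneg_of_le_pi (by linarith) (by linarith)
  have hprod : sin (β₂ - β₁) * ⟪dir β, y - z⟫ ≤ 0 := by
    rw [key]
    exact add_nonpos (mul_nonpos_of_nonneg_of_nonpos hs₁ hy₁)
      (mul_nonpos_of_nonneg_of_nonpos hs₂ hy₂)
  have := nonpos_of_mul_nonpos_right hprod (sin_pos_of_pos_of_lt_pi (by linarith) hπ)
  rw [inner_sub_right] at this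
  linarith

theorem upperSemicontinuous_faceMax (hC : IsCompact C) (hne : C.Nonempty) :
    UpperSemicontinuous (faceMax C) := by
  intro θ y hy
  by_contra h
  obtain ⟨θs, hθs, hyθs⟩ := exists_seq_forall_of_frequently (not_eventually.1 h)
  choose x hx hxmax using fun n => exists_faceMax hC hne (θs n)
  obtain ⟨z, hzC, φ, hφ, hxz⟩ := hC.tendsto_subseq fun n => (hx n).1
  have hθφ : Tendsto (θs ∘ φ) atTop (𝓝 θ) := hθs.comp hφ.tendsto_atTop
  have hz : z ∈ face C θ := by
    refine ⟨hzC, tendsto_nhds_unique (((continuous_dir.tendsto θ).comp hθφ).inner hxz) ?_⟩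
    exact (((continuous_support hC).tendsto θ).comp hθφ).congr fun n => ((hx (φ n)).2).symm
  have hyz : y ≤ ⟪dirPerp θ, z⟫ :=
    ge_of_tendsto (((continuous_dirPerp.tendsto θ).comp hθφ).inner hxz)
      (Eventually.of_forall fun n => (hxmax (φ n)).symm ▸ not_lt.1 (hyθs (φ n)))
  exact (hy.trans_le hyz).not_ge (le_faceMax hC hz)

end Support

section Apex

variable {C : Set ℝ²} {α θ : ℝ}

/-- The common point of the supporting lines of `C` with outer normals `dir θ` and
`dir (θ + α)`: the apex of a cap of angle `α`. -/
def apex (C : Set ℝ²) (α θ : ℝ) : ℝ² :=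
  support C θ • dir θ + ((support C (θ + α) - support C θ * cos α) / sin α) • dirPerp θ

theorem inner_dir_apex : ⟪dir θ, apex C α θ⟫ = support C θ := by
  simp [apex, inner_add_right, real_inner_smul_right, inner_dir_dirPerp]

theorem inner_dirPerp_apex :
    ⟪dirPerp θ, apex C α θ⟫ = (support C (θ + α) - support C θ * cos α) / sin α := by
  simp [apex, inner_add_right, real_inner_smul_right, inner_dirPerp_dir]

theorem inner_dir_add_apex (hα : sin α ≠ 0) :
    ⟪dir (θ + α), apex C α θ⟫ = support C (θ + α) := by
  rw [inner_dir_eq_cos_add_sin θ, inner_dir_apex, inner_dirPerp_apex, add_sub_cancel_left]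
  field_simp
  ring

theorem eq_apex_of_inner (hα : sin α ≠ 0) {z : ℝ²} (h₁ : ⟪dir θ, z⟫ = support C θ)
    (h₂ : ⟪dir (θ + α), z⟫ = support C (θ + α)) : z = apex C α θ := by
  have hcoord : ⟪dirPerp θ, z⟫ = ⟪dirPerp θ, apex C α θ⟫ := by
    rw [inner_dirPerp_apex, eq_div_iff hα, ← h₂, inner_dir_eq_cos_add_sin θ, h₁,
      add_sub_cancel_left]
    ring
  rw [eq_inner_dir_smul_add θ z, eq_inner_dir_smul_add θ (apex C α θ), h₁, inner_dir_apex, hcoord]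

theorem inner_dirPerp_apex_add_mul_sin (hα : sin α ≠ 0) :
    (⟪dirPerp θ, apex C α θ⟫ + ⟪dirPerp (θ + α), apex C α θ⟫) * sin α
      = (1 + cos α) * (support C (θ + α) - support C θ) := by
  have hperp : ⟪dirPerp (θ + α), apex C α θ⟫ = ⟪dirPerp θ, apex C α θ⟫ * cos α
      - support C θ * sin α := by
    simp only [apex, inner_add_right, real_inner_smul_right, inner_dirPerp_dir,
      inner_dirPerp_dirPerp]
    simp only [sub_self, sin_zero, cos_zero, show θ - (θ + α) = -α by ring, sin_neg, cos_neg]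
    ring
  rw [hperp, inner_dirPerp_apex]
  field_simp
  linear_combination (-support C θ) * sin_sq_add_cos_sq α

theorem continuous_apex (hC : IsCompact C) : Continuous (apex C α) := by
  have hs := continuous_support hC
  unfold apex
  fun_prop

theorem apex_mem_face (h : apex C α θ ∈ C) : apex C α θ ∈ face C θ :=
  ⟨h, inner_dir_apex⟩

theorem apex_mem_face_add (hα : sin α ≠ 0) (h : apex C α θ ∈ C) :
    apex C α θ ∈ face C (θ + α) :=
  ⟨h, inner_dir_add_apex hα⟩

theorem eq_apex_of_mem_face (hα : sin α ≠ 0) {z : ℝ²} (h₁ : z ∈ face C θ)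
    (h₂ : z ∈ face C (θ + α)) : z = apex C α θ :=
  eq_apex_of_inner hα h₁.2 h₂.2

theorem inner_dirPerp_le_apex (hC : IsCompact C) (hα : 0 < sin α) {x : ℝ²}
    (hx : x ∈ face C θ) : ⟪dirPerp θ, x⟫ ≤ ⟪dirPerp θ, apex C α θ⟫ := by
  have := support_ge_of_mem_face hC hx (θ + α)
  rw [add_sub_cancel_left] at this
  rw [inner_dirPerp_apex, le_div_iff₀ hα]
  linarith

theorem faceMax_lt_of_apex_not_mem (hC : IsCompact C) (hconv : Convex ℝ C) (hne : C.Nonempty)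
    (hα : 0 < sin α) (h : apex C α θ ∉ C) : faceMax C θ < ⟪dirPerp θ, apex C α θ⟫ := by
  by_contra! hle
  obtain ⟨x, hx, hxmin⟩ := exists_faceMin hC hne θ
  obtain ⟨P, hP, hPS⟩ := Icc_subset_image_face hC hconv hne θ
    ⟨hxmin ▸ inner_dirPerp_le_apex hC hα hx, hle⟩
  dsimp only at hPS
  have hdiff := sub_eq_inner_dirPerp_smul (y := apex C α θ) (hP.2.trans inner_dir_apex.symm)
  rw [inner_sub_right, hPS, sub_self, zero_smul, sub_eq_zero] at hdiff
  exact h (hdiff ▸ hP.1)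

end Apex

section Gap

variable {C : Set ℝ²} {α θ : ℝ}

/-- For `S = apex C α θ`, touching points `P ∈ face C θ` and `Q ∈ face C (θ + α)` have
`|SP| = ⟪dirPerp θ, S - P⟫` and `|SQ| = ⟪dirPerp (θ + α), Q - S⟫`. `gapPQ` is the least possible
`|SP|` minus the greatest possible `|SQ|`, and `gapQP` the least `|SQ|` minus the greatest
`|SP|`. -/
def gapPQ (C : Set ℝ²) (α θ : ℝ) : ℝ :=
  (⟪dirPerp θ, apex C α θ⟫ - faceMax C θ) - (faceMax C (θ + α) - ⟪dirPerp (θ + α), apex C α θ⟫)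

def gapQP (C : Set ℝ²) (α θ : ℝ) : ℝ :=
  (faceMin C (θ + α) - ⟪dirPerp (θ + α), apex C α θ⟫) - (⟪dirPerp θ, apex C α θ⟫ - faceMin C θ)

def HasIsoscelesCap (C : Set ℝ²) (α θ : ℝ) : Prop :=
  apex C α θ ∉ C ∧ gapPQ C α θ ≤ 0 ∧ gapQP C α θ ≤ 0

theorem gapPQ_add_gapQP_nonpos (hC : IsCompact C) (hne : C.Nonempty) :
    gapPQ C α θ + gapQP C α θ ≤ 0 := by
  unfold gapPQ gapQP
  linarith [faceMin_le_faceMax hC hne θ, faceMin_le_faceMax hC hne (θ + α)]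

theorem gapPQ_mul_sin (hα : sin α ≠ 0) :
    gapPQ C α θ * sin α
      = (1 + cos α) * (support C (θ + α) - support C θ)
        - (faceMax C θ + faceMax C (θ + α)) * sin α := by
  rw [← inner_dirPerp_apex_add_mul_sin hα, gapPQ]
  ring

theorem lowerSemicontinuous_gapPQ (hC : IsCompact C) (hne : C.Nonempty) :
    LowerSemicontinuous (gapPQ C α) := by
  have happex : Continuous fun θ =>
      ⟪dirPerp θ, apex C α θ⟫ + ⟪dirPerp (θ + α), apex C α θ⟫ := by
    have := continuous_apex (α := α) hC
    fun_prop
  have hmax := upperSemicontinuous_faceMax hC hne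
  have heq : gapPQ C α = fun θ => (⟪dirPerp θ, apex C α θ⟫ + ⟪dirPerp (θ + α), apex C α θ⟫)
      + (-faceMax C) θ + (-faceMax C ∘ (· + α)) θ := by
    funext θ
    simp only [gapPQ, Pi.neg_apply, Function.comp_apply]
    ring
  rw [heq]
  exact (happex.lowerSemicontinuous.add hmax.neg).add (hmax.comp (continuous_add_const α)).neg

theorem gapPQ_nonpos_of_apex_mem (hC : IsCompact C) (hne : C.Nonempty) (hα : α ∈ Ioo 0 π)
    {θ₀ : ℝ} (h₀ : apex C α θ₀ ∈ C) (h₁ : θ₀ ≤ θ) (h₂ : θ ≤ θ₀ + α / 2) : gapPQ C α θ ≤ 0 := by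
  obtain ⟨hα₀, hαπ⟩ := hα
  have hs : 0 < sin α := sin_pos_of_pos_of_lt_pi hα₀ hαπ
  set z := apex C α θ₀
  have hz₀ := apex_mem_face h₀
  have hz₁ := apex_mem_face_add hs.ne' h₀
  have hz : z ∈ face C θ := face_inter_face_subset hC h₁ (by linarith) (by linarith) ⟨hz₀, hz₁⟩
  have hzmid : z ∈ face C (θ + α / 2) :=
    face_inter_face_subset hC (by linarith) (by linarith) (by linarith) ⟨hz₀, hz₁⟩
  obtain ⟨Q, hQ, hQmax⟩ := exists_faceMax hC hne (θ + α)
  have hcrit := inner_dirPerp_sub_mul_sin (S := apex C α θ) (hz.2.trans inner_dir_apex.symm)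
    (hQ.2.trans (inner_dir_add_apex hs.ne').symm)
  have hmid : dir θ + dir (θ + α) = (2 * cos (α / 2)) • dir (θ + α / 2) := by
    rw [← dir_sub_add_dir_add, add_sub_cancel_right, add_assoc, add_halves]
  have hQz : ⟪dir (θ + α / 2), Q - z⟫ ≤ 0 := by
    rw [inner_sub_right]
    linarith [((mem_face_iff hC).1 hzmid).2 Q hQ.1]
  have hcos : 0 < cos (α / 2) := cos_pos_of_mem_Ioo ⟨by linarith, by linarith⟩
  rw [hmid, real_inner_smul_left] at hcrit
  have hgap : gapPQ C α θ ≤ ⟪dirPerp θ, apex C α θ - z⟫ - ⟪dirPerp (θ + α), Q - apex C α θ⟫ := by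
    rw [gapPQ, inner_sub_right, inner_sub_right, hQmax]
    linarith [le_faceMax hC hz]
  have : (⟪dirPerp θ, apex C α θ - z⟫ - ⟪dirPerp (θ + α), Q - apex C α θ⟫) * sin α ≤ 0 := by
    rw [hcrit]
    exact mul_nonpos_of_nonneg_of_nonpos (by positivity) hQz
  linarith [nonpos_of_mul_nonpos_left this hs]

end Gap

section Mirror

variable {C : Set ℝ²} {α θ : ℝ}

def mirror : ℝ² ≃ₗᵢ[ℝ] ℝ² := (ℝ ∙ dir 0).reflection

theorem mirror_mirror (x : ℝ²) : mirror (mirror x) = x :=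
  Submodule.reflection_reflection _ x

theorem inner_mirror (x y : ℝ²) : ⟪mirror x, y⟫ = ⟪x, mirror y⟫ := by
  conv_lhs => rw [← mirror_mirror y]
  exact mirror.inner_map_map x (mirror y)

theorem mirror_dir (θ : ℝ) : mirror (dir θ) = dir (-θ) := by
  rw [mirror, Submodule.reflection_singleton_apply, norm_dir, inner_dir_dir]
  ext i; fin_cases i
  · simp [dir]; ring
  · simp [dir]

theorem mirror_dirPerp (θ : ℝ) : mirror (dirPerp θ) = -dirPerp (-θ) := by
  rw [dirPerp, mirror_dir, dirPerp, show -θ + π / 2 = -(θ + π / 2) + π by ring, dir_add_pi,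
    neg_neg]

theorem image_mirror_image_mirror (C : Set ℝ²) : mirror '' (mirror '' C) = C := by
  simp [image_image, mirror_mirror]

theorem support_image_mirror : support (mirror '' C) θ = support C (-θ) := by
  simp only [support, image_image, ← inner_mirror, mirror_dir]

theorem face_image_mirror : face (mirror '' C) θ = mirror '' face C (-θ) := by
  ext y
  obtain ⟨x, rfl⟩ : ∃ x, y = mirror x := ⟨mirror y, (mirror_mirror y).symm⟩
  simp [face, support_image_mirror, mirror.injective.mem_set_image, ← inner_mirror, mirror_dir]

theorem faceMax_image_mirror : faceMax (mirror '' C) θ = -faceMin C (-θ) := by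
  have h : (⟪dirPerp θ, ·⟫) ∘ mirror = Neg.neg ∘ (⟪dirPerp (-θ), ·⟫) := by
    funext x
    simp [← inner_mirror, mirror_dirPerp]
  rw [faceMax, face_image_mirror, image_image, ← Function.comp_def, h, image_comp,
    image_neg_eq_neg, Real.sSup_neg, faceMin]

theorem apex_image_mirror (hα : sin α ≠ 0) :
    apex (mirror '' C) α (-θ - α) = mirror (apex C α θ) := by
  refine (eq_apex_of_inner hα ?_ ?_).symm
  · rw [← inner_mirror, mirror_dir, support_image_mirror, neg_sub', neg_neg, sub_neg_eq_add,
      inner_dir_add_apex hα]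
  · rw [← inner_mirror, mirror_dir, support_image_mirror, sub_add_cancel, neg_neg, inner_dir_apex]

theorem gapPQ_image_mirror (hα : sin α ≠ 0) :
    gapPQ (mirror '' C) α (-θ - α) = gapQP C α θ := by
  simp only [gapPQ, gapQP, apex_image_mirror hα, faceMax_image_mirror, ← inner_mirror,
    mirror_dirPerp, inner_neg_left, sub_add_cancel, neg_sub', neg_neg, sub_neg_eq_add]
  ring

theorem gapQP_image_mirror (hα : sin α ≠ 0) :
    gapQP (mirror '' C) α (-θ - α) = gapPQ C α θ := by
  rw [← gapPQ_image_mirror hα, image_mirror_image_mirror]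
  ring_nf

theorem hasIsoscelesCap_image_mirror (hα : sin α ≠ 0) :
    HasIsoscelesCap (mirror '' C) α (-θ - α) ↔ HasIsoscelesCap C α θ := by
  rw [HasIsoscelesCap, HasIsoscelesCap, apex_image_mirror hα, mirror.injective.mem_set_image,
    gapPQ_image_mirror hα, gapQP_image_mirror hα, and_comm (a := gapQP C α θ ≤ 0)]

theorem lowerSemicontinuous_gapQP (hC : IsCompact C) (hne : C.Nonempty) (hα : sin α ≠ 0) :
    LowerSemicontinuous (gapQP C α) := by
  have h := (lowerSemicontinuous_gapPQ (α := α) (hC.image mirror.continuous)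
    (hne.image _)).comp (continuous_neg.sub continuous_const : Continuous fun θ : ℝ => -θ - α)
  convert h using 1
  funext θ
  exact (gapPQ_image_mirror hα).symm

end Mirror

section GridSum

def gridSum (f : ℝ → ℝ) (N : ℕ) (x : ℝ) : ℝ := ∑ i ∈ Finset.range N, f (x + 2 * π * i / N)

variable {f : ℝ → ℝ} {N : ℕ}

theorem periodic_gridSum (hf : Function.Periodic f (2 * π)) (hN : N ≠ 0) :
    Function.Periodic (gridSum f N) (2 * π / N) := fun x => by
  have hshift : ∀ i : ℕ, x + 2 * π / N + 2 * π * i / N = x + 2 * π * (i + 1 : ℕ) / N := fun i => by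
    push_cast; ring
  have hlast : f (x + 2 * π * N / N) = f (x + 2 * π * (0 : ℕ) / N) := by
    rw [mul_div_assoc, div_self (Nat.cast_ne_zero.2 hN), mul_one, hf, Nat.cast_zero, mul_zero,
      zero_div, add_zero]
  have h₁ := Finset.sum_range_succ' (fun i => f (x + 2 * π * i / N)) N
  have h₂ := Finset.sum_range_succ (fun i => f (x + 2 * π * i / N)) N
  simp only [gridSum, hshift]
  linarith

theorem abs_gridSum_sub_le {L : ℝ} (hf : ∀ a b, |f a - f b| ≤ L * |a - b|) (x y : ℝ) :
    |gridSum f N x - gridSum f N y| ≤ N * L * |x - y| := by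
  rw [gridSum, gridSum, ← Finset.sum_sub_distrib]
  refine (Finset.abs_sum_le_sum_abs _ _).trans ?_
  calc _ ≤ ∑ _i ∈ Finset.range N, L * |x - y| := Finset.sum_le_sum fun i _ => by
        simpa only [add_sub_add_right_eq_sub] using hf (x + 2 * π * i / N) (y + 2 * π * i / N)
    _ = N * L * |x - y| := by rw [Finset.sum_const, Finset.card_range, nsmul_eq_mul, mul_assoc]

theorem abs_gridSum_add_sub_le {L : ℝ} (hper : Function.Periodic f (2 * π))
    (hf : ∀ a b, |f a - f b| ≤ L * |a - b|) (hN : N ≠ 0) (x γ : ℝ) :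
    |gridSum f N (x + γ) - gridSum f N x| ≤ 2 * π * L := by
  have hN' : (0 : ℝ) < N := Nat.cast_pos.2 (Nat.pos_of_ne_zero hN)
  have hL : 0 ≤ L := by simpa using (abs_nonneg _).trans (hf 1 0)
  obtain ⟨y, hy, hxy⟩ := (periodic_gridSum hper hN).exists_mem_Ico (by positivity) (x + γ) x
  rw [hxy]
  calc _ ≤ N * L * |y - x| := abs_gridSum_sub_le hf y x
    _ ≤ N * L * (2 * π / N) := by
        gcongr
        rw [abs_of_nonneg (by linarith [hy.1])]
        linarith [hy.2]
    _ = 2 * π * L := by field_simp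

theorem gridSum_le {M : ℝ} (hf : ∀ θ, f θ ≤ M) (x : ℝ) : gridSum f N x ≤ N * M := by
  calc gridSum f N x ≤ ∑ _i ∈ Finset.range N, M := Finset.sum_le_sum fun i _ => hf _
    _ = N * M := by rw [Finset.sum_const, Finset.card_range, nsmul_eq_mul]

theorem gridSum_comp_add (c x : ℝ) :
    ∑ i ∈ Finset.range N, f (x + 2 * π * i / N + c) = gridSum f N (x + c) :=
  Finset.sum_congr rfl fun i _ => by rw [add_right_comm]

end GridSum

theorem one_sub_cos_le_mul_sin {δ : ℝ} (h₀ : 0 ≤ δ) (h₁ : δ ≤ π / 2) : 1 - cos δ ≤ δ * sin δ := by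
  have hπ : 1 / 2 ≤ 2 / π := by rw [div_le_div_iff₀ two_pos pi_pos]; linarith [pi_le_four]
  nlinarith [one_sub_sq_div_two_le_cos (x := δ), mul_le_sin h₀ h₁,
    mul_le_mul_of_nonneg_left (mul_le_sin h₀ h₁) h₀, mul_le_mul_of_nonneg_right hπ (sq_nonneg δ)]

section Averaging

variable {C : Set ℝ²} {α : ℝ}

theorem neg_le_gridSum_faceMax (hC : IsCompact C) (hne : C.Nonempty) {R : ℝ}
    (hR : ∀ x ∈ C, ‖x‖ ≤ R) {N : ℕ} (hN : 4 ≤ N) (x : ℝ) :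
    -(2 * π * R) ≤ gridSum (faceMax C) N x := by
  set δ := 2 * π / N with hδ
  have hN' : (4 : ℝ) ≤ N := by exact_mod_cast hN
  have hδ₀ : 0 < δ := by positivity
  have hδπ : δ ≤ π / 2 := by
    rw [hδ, div_le_div_iff₀ (by linarith) two_pos]; nlinarith [pi_pos]
  have hs : 0 < sin δ := sin_pos_of_pos_of_lt_pi hδ₀ (by linarith [pi_pos])
  have hpoint : ∀ θ, support C θ * cos δ - support C (θ - δ) ≤ faceMax C θ * sin δ := fun θ => by
    obtain ⟨Y, hY, hYmax⟩ := exists_faceMax hC hne θ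
    have := support_ge_of_mem_face hC hY (θ - δ)
    rw [sub_sub_cancel_left, cos_neg, sin_neg, hYmax] at this
    linarith
  have hsum : cos δ * gridSum (support C) N x - gridSum (support C) N (x - δ)
      ≤ gridSum (faceMax C) N x * sin δ := by
    rw [gridSum, gridSum, gridSum, Finset.mul_sum, Finset.sum_mul, ← Finset.sum_sub_distrib]
    refine Finset.sum_le_sum fun i _ => ?_
    rw [mul_comm (cos δ), show x - δ + 2 * π * i / N = x + 2 * π * i / N - δ by ring]
    exact hpoint _
  rw [(periodic_gridSum periodic_support (by omega)).sub_eq] at hsum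
  have hT := gridSum_le (N := N) (support_le hne hR) x
  have hR₀ : 0 ≤ R := (norm_nonneg _).trans (hR _ hne.some_mem)
  have hNδ : N * δ = 2 * π := by rw [hδ]; field_simp
  have hcos : 0 ≤ 1 - cos δ := sub_nonneg.2 (cos_le_one δ)
  refine le_of_mul_le_mul_right ?_ hs
  calc -(2 * π * R) * sin δ = -((δ * sin δ) * (N * R)) := by rw [← hNδ]; ring
    _ ≤ -((1 - cos δ) * (N * R)) := by
        gcongr; exact one_sub_cos_le_mul_sin hδ₀.le hδπ
    _ ≤ -((1 - cos δ) * gridSum (support C) N x) := by gcongr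
    _ ≤ gridSum (faceMax C) N x * sin δ := by linarith

theorem gridSum_gapPQ_mul_sin_le (hC : IsCompact C) (hne : C.Nonempty) (hα : α ∈ Ioo 0 π)
    {R : ℝ} (hR : ∀ x ∈ C, ‖x‖ ≤ R) {N : ℕ} (hN : 4 ≤ N) (x : ℝ) :
    gridSum (gapPQ C α) N x * sin α ≤ 8 * π * R := by
  have hs : 0 < sin α := sin_pos_of_pos_of_lt_pi hα.1 hα.2
  have hR₀ : 0 ≤ R := (norm_nonneg _).trans (hR _ hne.some_mem)
  have hsum : gridSum (gapPQ C α) N x * sin α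
      = (1 + cos α) * (gridSum (support C) N (x + α) - gridSum (support C) N x)
        - (gridSum (faceMax C) N x + gridSum (faceMax C) N (x + α)) * sin α := by
    rw [gridSum, Finset.sum_mul, Finset.sum_congr rfl fun i _ => gapPQ_mul_sin hs.ne',
      Finset.sum_sub_distrib, ← Finset.mul_sum, ← Finset.sum_mul, Finset.sum_sub_distrib,
      Finset.sum_add_distrib, gridSum_comp_add, gridSum_comp_add]
    rfl
  have hshift := le_of_abs_le <| abs_gridSum_add_sub_le periodic_support
    (abs_support_sub_support_le hC hne hR) (N := N) (by omega) x α
  have hsupp : (1 + cos α) * (gridSum (support C) N (x + α) - gridSum (support C) N x)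
      ≤ 2 * (2 * π * R) :=
    (mul_le_mul_of_nonneg_left hshift (by linarith [neg_one_le_cos α])).trans
      (mul_le_mul_of_nonneg_right (by linarith [cos_le_one α]) (by positivity))
  have hface : -(gridSum (faceMax C) N x + gridSum (faceMax C) N (x + α)) * sin α
      ≤ 2 * (2 * π * R) := by
    have h₁ := neg_le_gridSum_faceMax hC hne hR hN x
    have h₂ := neg_le_gridSum_faceMax hC hne hR hN (x + α)
    calc _ ≤ 2 * (2 * π * R) * sin α := mul_le_mul_of_nonneg_right (by linarith) hs.le
      _ ≤ 2 * (2 * π * R) := mul_le_of_le_one_right (by positivity) (sin_le_one α)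
  linarith

theorem exists_gapPQ_nonpos (hC : IsCompact C) (hne : C.Nonempty) (hα : α ∈ Ioo 0 π) (x : ℝ) :
    ∃ θ ∈ Icc x (x + 2 * π), gapPQ C α θ ≤ 0 := by
  by_contra! hpos
  have hs : 0 < sin α := sin_pos_of_pos_of_lt_pi hα.1 hα.2
  obtain ⟨θm, hθm, hmin⟩ := (lowerSemicontinuous_gapPQ (α := α) hC hne).lowerSemicontinuousOn
    (Icc x (x + 2 * π)) |>.exists_isMinOn (nonempty_Icc.2 (by linarith [pi_pos])) isCompact_Icc
  set ε := gapPQ C α θm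
  have hε : 0 < ε := hpos θm hθm
  obtain ⟨R, hR⟩ := hC.isBounded.exists_norm_le
  obtain ⟨N, hN⟩ := exists_nat_gt (max 4 (8 * π * R / (ε * sin α)))
  have hN₄ : 4 ≤ N := by exact_mod_cast (le_max_left _ _).trans hN.le
  have hlarge : 8 * π * R < N * (ε * sin α) :=
    (div_lt_iff₀ (by positivity)).1 ((le_max_right _ _).trans_lt hN)
  have hlow : N * ε ≤ gridSum (gapPQ C α) N x := by
    rw [gridSum, show (N : ℝ) * ε = ∑ _i ∈ Finset.range N, ε by simp]
    refine Finset.sum_le_sum fun i hi => hmin ⟨le_add_of_nonneg_right (by positivity), ?_⟩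
    have hN₀ : (0 : ℝ) < N := by positivity
    have hi : (i : ℝ) ≤ N := by exact_mod_cast (Finset.mem_range.1 hi).le
    rw [add_le_add_iff_left, div_le_iff₀ hN₀]
    nlinarith [pi_pos]
  nlinarith [gridSum_gapPQ_mul_sin_le hC hne hα hR hN₄ x]

end Averaging

section Existence

variable {C : Set ℝ²} {α : ℝ}

theorem support_add_support_add_pi_pos (hC : IsCompact C) (hint : (interior C).Nonempty)
    (θ : ℝ) : 0 < support C θ + support C (θ + π) := by
  obtain ⟨x, hx⟩ := hint
  obtain ⟨r, hr, hball⟩ := Metric.isOpen_iff.1 isOpen_interior x hx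
  have hmem : ∀ s : ℝ, |s| < r → x + s • dir θ ∈ C := fun s hs =>
    interior_subset <| hball <| by simpa [norm_smul] using hs
  have hr₂ : |r / 2| < r := by rw [abs_of_pos (half_pos hr)]; linarith
  have h₁ := inner_le_support hC (hmem (r / 2) hr₂) θ
  have h₂ := inner_le_support hC (hmem (-(r / 2)) (by rwa [abs_neg])) (θ + π)
  simp only [dir_add_pi, inner_neg_left, inner_add_right, real_inner_smul_right,
    real_inner_self_eq_norm_sq, norm_dir] at h₁ h₂
  linarith

theorem apex_eq_apex_of_mem (hC : IsCompact C) (hα : α ∈ Ioo 0 π) {θ θ' : ℝ}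
    (h : apex C α θ ∈ C) (h' : apex C α θ' ∈ C) (h₁ : θ ≤ θ') (h₂ : θ' ≤ θ + α / 2) :
    apex C α θ' = apex C α θ := by
  obtain ⟨hα₀, hαπ⟩ := hα
  have hs := (sin_pos_of_pos_of_lt_pi hα₀ hαπ).ne'
  have hs' : sin (θ + α - θ') ≠ 0 := (sin_pos_of_pos_of_lt_pi (by linarith) (by linarith)).ne'
  have hθα : θ' + (θ + α - θ') = θ + α := by ring
  have e := eq_apex_of_mem_face hs' (θ := θ') (z := apex C α θ)
    (face_inter_face_subset hC h₁ (by linarith) (by linarith)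
      ⟨apex_mem_face h, apex_mem_face_add hs h⟩)
    (by rw [hθα]; exact apex_mem_face_add hs h)
  have e' := eq_apex_of_mem_face hs' (θ := θ') (z := apex C α θ') (apex_mem_face h') (by
    rw [hθα]
    exact face_inter_face_subset hC (by linarith) (by linarith) (by linarith)
      ⟨apex_mem_face h', apex_mem_face_add hs h'⟩)
  rw [e, e']

theorem exists_apex_not_mem (hC : IsCompact C) (hint : (interior C).Nonempty)
    (hα : α ∈ Ioo 0 π) : ∃ θ, apex C α θ ∉ C := by
  by_contra! h
  -- Nearby apexes lie on two common supporting lines, so they coincide.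
  have hlc : IsLocallyConstant (apex C α) := (IsLocallyConstant.iff_eventually_eq _).2 fun θ => by
    filter_upwards [Metric.ball_mem_nhds θ (half_pos hα.1)] with θ' hθ'
    rw [Metric.mem_ball, Real.dist_eq, abs_lt] at hθ'
    rcases le_total θ θ' with hle | hle
    · exact apex_eq_apex_of_mem hC hα (h θ) (h θ') hle (by linarith)
    · exact (apex_eq_apex_of_mem hC hα (h θ') (h θ) hle (by linarith)).symm
  have hconst : apex C α π = apex C α 0 := hlc.apply_eq_of_isPreconnected isPreconnected_univ
    (mem_univ _) (mem_univ _)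
  have h₀ := (apex_mem_face (h 0)).2
  have hπ := (apex_mem_face (h π)).2
  rw [hconst, ← zero_add π, dir_add_pi, inner_neg_left] at hπ
  linarith [support_add_support_add_pi_pos hC hint 0]

theorem exists_hasIsoscelesCap_of_gapPQ_pos (hC : IsCompact C) (hne : C.Nonempty)
    (hα : α ∈ Ioo 0 π) {θ₀ : ℝ} (h₀ : apex C α θ₀ ∉ C) (hpos : 0 < gapPQ C α θ₀) :
    ∃ θ, HasIsoscelesCap C α θ := by
  obtain ⟨θ₁, hθ₁, hθ₁0⟩ := exists_gapPQ_nonpos hC hne hα (θ₀ - 2 * π)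
  set K := {θ ∈ Icc θ₁ θ₀ | apex C α θ ∈ C ∨ gapPQ C α θ ≤ 0}
  have hK : IsClosed K := isClosed_Icc.inter <|
    (hC.isClosed.preimage (continuous_apex hC)).union
      ((lowerSemicontinuous_gapPQ hC hne).isClosed_preimage 0)
  have hKbdd : BddAbove K := bddAbove_Icc.mono inter_subset_left
  have hθ₁K : θ₁ ∈ K := ⟨⟨le_rfl, by linarith [hθ₁.2]⟩, Or.inr hθ₁0⟩
  set θ₂ := sSup K
  have hθ₂K : θ₂ ∈ K := hK.csSup_mem ⟨_, hθ₁K⟩ hKbdd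
  have hθ₂₀ : θ₂ < θ₀ := hθ₂K.1.2.lt_of_ne fun heq => by
    rcases hθ₂K.2 with h | h
    · exact h₀ (heq ▸ h)
    · exact (heq ▸ h).not_gt hpos
  have hright : ∀ᶠ θ in 𝓝[>] θ₂, apex C α θ ∉ C ∧ 0 < gapPQ C α θ := by
    filter_upwards [Ioc_mem_nhdsGT hθ₂₀] with θ hθ
    have hθK : θ ∉ K := fun hθK => (le_csSup hKbdd hθK).not_gt hθ.1
    have hθI : θ ∈ Icc θ₁ θ₀ := ⟨(le_csSup hKbdd hθ₁K).trans hθ.1.le, hθ.2⟩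
    have := not_or.1 fun h => hθK ⟨hθI, h⟩
    exact ⟨this.1, not_le.1 this.2⟩
  by_cases hmem : apex C α θ₂ ∈ C
  · have hle : ∀ᶠ θ in 𝓝[>] θ₂, gapPQ C α θ ≤ 0 := by
      filter_upwards [Ioc_mem_nhdsGT (by linarith [hα.1] : θ₂ < θ₂ + α / 2)] with θ hθ
      exact gapPQ_nonpos_of_apex_mem hC hne hα hmem hθ.1.le hθ.2
    obtain ⟨θ, h₁, h₂⟩ := (hright.and hle).exists
    exact absurd h₂ (not_le.2 h₁.2)
  refine ⟨θ₂, hmem, hθ₂K.2.resolve_left hmem, not_lt.1 fun hQP => ?_⟩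
  have hQP' : ∀ᶠ θ in 𝓝[>] θ₂, 0 < gapQP C α θ := nhdsWithin_le_nhds <|
    lowerSemicontinuous_gapQP hC hne (sin_pos_of_pos_of_lt_pi hα.1 hα.2).ne' θ₂ 0 hQP
  obtain ⟨θ, h₁, h₂⟩ := (hright.and hQP').exists
  linarith [gapPQ_add_gapQP_nonpos hC hne (α := α) (θ := θ)]

theorem exists_hasIsoscelesCap (hC : IsCompact C) (hint : (interior C).Nonempty)
    (hα : α ∈ Ioo 0 π) : ∃ θ, HasIsoscelesCap C α θ := by
  have hne : C.Nonempty := hint.mono interior_subset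
  have hs := (sin_pos_of_pos_of_lt_pi hα.1 hα.2).ne'
  obtain ⟨θ₀, h₀⟩ := exists_apex_not_mem hC hint hα
  by_cases hPQ : 0 < gapPQ C α θ₀
  · exact exists_hasIsoscelesCap_of_gapPQ_pos hC hne hα h₀ hPQ
  by_cases hQP : 0 < gapQP C α θ₀
  · obtain ⟨θ, hθ⟩ := exists_hasIsoscelesCap_of_gapPQ_pos (hC.image mirror.continuous)
      (hne.image _) hα (θ₀ := -θ₀ - α)
      (by rwa [apex_image_mirror hs, mirror.injective.mem_set_image])
      (by rwa [gapPQ_image_mirror hs])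
    refine ⟨-θ - α, (hasIsoscelesCap_image_mirror hs).1 ?_⟩
    rwa [show -(-θ - α) - α = θ by ring]
  exact ⟨θ₀, h₀, not_lt.1 hPQ, not_lt.1 hQP⟩

theorem exists_isosceles_legs (hC : IsCompact C) (hconv : Convex ℝ C) (hne : C.Nonempty)
    (hα : α ∈ Ioo 0 π) {θ : ℝ} (h : HasIsoscelesCap C α θ) :
    ∃ t : ℝ, 0 < t ∧ ∃ P ∈ face C θ, ∃ Q ∈ face C (θ + α),
      P - apex C α θ = (-t) • dirPerp θ ∧ Q - apex C α θ = t • dirPerp (θ + α) := by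
  obtain ⟨hS, hPQ, hQP⟩ := h
  have hs := sin_pos_of_pos_of_lt_pi hα.1 hα.2
  set S := apex C α θ
  -- The common leg length is the larger of the least possible `|SP|` and the least `|SQ|`.
  set t := max (⟪dirPerp θ, S⟫ - faceMax C θ) (faceMin C (θ + α) - ⟪dirPerp (θ + α), S⟫)
  have hmax := faceMax_lt_of_apex_not_mem hC hconv hne hs hS
  have hmm := faceMin_le_faceMax hC hne θ
  have hmm' := faceMin_le_faceMax hC hne (θ + α)
  have ht₁ : ⟪dirPerp θ, S⟫ - faceMax C θ ≤ t := le_max_left _ _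
  have ht₂ : faceMin C (θ + α) - ⟪dirPerp (θ + α), S⟫ ≤ t := le_max_right _ _
  have ht₃ : t ≤ ⟪dirPerp θ, S⟫ - faceMin C θ :=
    max_le (by linarith) (by rw [gapQP] at hQP; linarith)
  have ht₄ : t ≤ faceMax C (θ + α) - ⟪dirPerp (θ + α), S⟫ :=
    max_le (by rw [gapPQ] at hPQ; linarith) (by linarith)
  obtain ⟨P, hP, hPt⟩ := Icc_subset_image_face hC hconv hne θ
    (show ⟪dirPerp θ, S⟫ - t ∈ _ from ⟨by linarith, by linarith⟩)
  obtain ⟨Q, hQ, hQt⟩ := Icc_subset_image_face hC hconv hne (θ + α)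
    (show ⟪dirPerp (θ + α), S⟫ + t ∈ _ from ⟨by linarith, by linarith⟩)
  refine ⟨t, by linarith, P, hP, Q, hQ, ?_, ?_⟩
  · rw [sub_eq_inner_dirPerp_smul (hP.2.trans inner_dir_apex.symm), inner_sub_right]
    simp only at hPt
    rw [hPt]
    congr 1
    ring
  · rw [sub_eq_inner_dirPerp_smul (hQ.2.trans (inner_dir_add_apex hs.ne').symm), inner_sub_right]
    simp only at hQt
    rw [hQt]
    congr 1
    ring

end Existence

theorem isTangentAt_of_mem_face {C : Set ℝ²} (hC : IsCompact C) {θ : ℝ} {S P : ℝ²}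
    (hP : P ∈ face C θ) (hS : ⟪dir θ, S⟫ = support C θ) : IsTangentAt C S P := by
  refine ⟨hP.1, (innerSL ℝ (dir θ)).toLinearMap, fun h => ?_, ?_, fun x hx => ?_⟩
  · simpa using LinearMap.congr_fun h (dir θ)
  · simp [hS, hP.2]
  · simpa [hP.2] using inner_le_support hC hx θ

theorem angle_neg_smul_dirPerp_smul_dirPerp {α θ t : ℝ} (ht : 0 < t) (hα : α ∈ Icc 0 π) :
    InnerProductGeometry.angle ((-t) • dirPerp θ) (t • dirPerp (θ + α)) = π - α := by
  rw [neg_smul, InnerProductGeometry.angle_neg_left,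
    InnerProductGeometry.angle_smul_left_of_pos _ _ ht,
    InnerProductGeometry.angle_smul_right_of_pos _ _ ht, InnerProductGeometry.angle,
    inner_dirPerp_dirPerp, norm_dirPerp, norm_dirPerp, add_sub_cancel_left, mul_one, div_one,
    arccos_cos hα.1 hα.2]

end PlaneCap

end

open PlaneCap

/-- Every compact convex body `C` in the plane has an isosceles cap of any
prescribed angle `α ∈ (0, π)`: there are an exterior point `S` and touching
points `P`, `Q` of the two supporting lines through `S` such that the cap
angle at `S` is `α` (i.e. `∠ P S Q = π - α`) and `|SP| = |SQ|`. -/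
theorem exists_isosceles_cap_of_angle
    (C : Set (EuclideanSpace ℝ (Fin 2)))
    (hcomp : IsCompact C) (hconv : Convex ℝ C)
    (hint : (interior C).Nonempty)
    (α : ℝ) (hα : α ∈ Set.Ioo 0 Real.pi) :
    ∃ (S P Q : EuclideanSpace ℝ (Fin 2)), S ∉ C ∧
      IsTangentAt C S P ∧ IsTangentAt C S Q ∧
      EuclideanGeometry.angle P S Q = Real.pi - α ∧
      dist S P = dist S Q := by
  have hne : C.Nonempty := hint.mono interior_subset
  have hs : sin α ≠ 0 := (sin_pos_of_pos_of_lt_pi hα.1 hα.2).ne'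
  obtain ⟨θ, hθ⟩ := exists_hasIsoscelesCap hcomp hint hα
  obtain ⟨t, ht, P, hP, Q, hQ, hPS, hQS⟩ := exists_isosceles_legs hcomp hconv hne hα hθ
  refine ⟨apex C α θ, P, Q, hθ.1, isTangentAt_of_mem_face hcomp hP inner_dir_apex,
    isTangentAt_of_mem_face hcomp hQ (inner_dir_add_apex hs), ?_, ?_⟩
  · rw [EuclideanGeometry.angle, vsub_eq_sub, vsub_eq_sub, hPS, hQS]
    exact angle_neg_smul_dirPerp_smul_dirPerp ht (Ioo_subset_Icc_self hα)
  · rw [dist_eq_norm', dist_eq_norm', hPS, hQS, norm_smul, norm_smul, norm_neg, norm_dirPerp,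
      norm_dirPerp]
end

section
/- Let C be a compact convex body in the Euclidean plane that is not a circular disc. Then C has a non-isosceles cap: there exist an exterior point S and supporting lines through S touching C at P and Q with |SP| ≠ |SQ|. -/
open scoped RealInnerProductSpace

/-!
If every cap of `C` is isosceles, every supporting line touches `C` at a single point: otherwise
a point `S` far out on that line sees two touching points at different distances. For unit normals
`u ≠ ±v` with touching points `P`, `Q`, the two supporting lines meet at a point `S`, and the tangent
lengths satisfy `|SP| |sin θ| = ⟪v, Q - P⟫` and `|SQ| |sin θ| = ⟪u, P - Q⟫`, so isosceles caps give
`⟪u + v, P - Q⟫ = 0`. Taking `v = ±e` against the touching points `A`, `B` of the two supporting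
lines with normals `±e` shows that the support function of `C` is that of the disc with centre
`(A + B) / 2` and radius `⟪e, A - B⟫ / 2`; a closed convex set is determined by its support function.
-/

section Plane

attribute [local instance] FiniteDimensional.of_fact_finrank_eq_two

variable {E : Type*} [NormedAddCommGroup E] [InnerProductSpace ℝ E]
  [Fact (Module.finrank ℝ E = 2)]

theorem inner_sq_eq_of_inner_eq_zero {u w : E} (hu : ‖u‖ = 1) (huw : ⟪u, w⟫ = 0) (v : E) :
    ⟪v, w⟫ ^ 2 = ‖w‖ ^ 2 * (‖v‖ ^ 2 - ⟪u, v⟫ ^ 2) := by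
  let o : Orientation ℝ E (Fin 2) := (Module.finBasisOfFinrankEq ℝ E Fact.out).orientation
  -- `⟪w, v⟫ = ω u w * ω u v` with `(ω u w)² = ‖w‖²` and `(ω u v)² = ‖v‖² - ⟪u, v⟫²`
  have hwv := o.inner_mul_inner_add_areaForm_mul_areaForm u w v
  have hw := o.inner_sq_add_areaForm_sq u w
  have hv := o.inner_sq_add_areaForm_sq u v
  rw [hu] at hwv hw hv
  rw [huw] at hwv hw
  rw [real_inner_comm]
  linear_combination (-(o.areaForm u w * o.areaForm u v) - ⟪w, v⟫) * hwv +
    o.areaForm u v ^ 2 * hw + ‖w‖ ^ 2 * hv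

theorem exists_inner_sub_eq_zero_and_inner_sub_eq_zero {u v : E}
    (huv : ⟪u, v⟫ ^ 2 ≠ ‖u‖ ^ 2 * ‖v‖ ^ 2) (P Q : E) :
    ∃ S, ⟪u, S - P⟫ = 0 ∧ ⟪v, S - Q⟫ = 0 := by
  let o : Orientation ℝ E (Fin 2) := (Module.finBasisOfFinrankEq ℝ E Fact.out).orientation
  have hJ : ⟪v, o.rightAngleRotation u⟫ ≠ 0 := by
    intro h
    have := o.inner_sq_add_areaForm_sq v u
    rw [o.inner_rightAngleRotation_right, neg_eq_zero] at h
    rw [h, real_inner_comm] at this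
    exact huv (by linarith)
  refine ⟨P + (⟪v, Q - P⟫ / ⟪v, o.rightAngleRotation u⟫) • o.rightAngleRotation u, ?_, ?_⟩
  · simp [inner_smul_right, o.inner_rightAngleRotation_right, o.areaForm_apply_self]
  · rw [add_sub_right_comm, inner_add_right, inner_smul_right, div_mul_cancel₀ _ hJ,
      ← inner_add_right]
    simp

end Plane

section Ball

variable {F : Type*} [NormedAddCommGroup F] [InnerProductSpace ℝ F] [CompleteSpace F]

theorem eq_closedBall_of_isGreatest_inner {C : Set F} (hC : IsClosed C) (hconv : Convex ℝ C)
    (hne : C.Nonempty) {O : F} {r : ℝ} (hr : 0 ≤ r)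
    (hsupp : ∀ ν : F, ‖ν‖ = 1 → IsGreatest ((⟪ν, ·⟫) '' C) (⟪ν, O⟫ + r)) :
    C = Metric.closedBall O r := by
  apply Set.Subset.antisymm
  · intro x hx
    rw [Metric.mem_closedBall, dist_eq_norm]
    rcases eq_or_ne (x - O) 0 with hxO | hxO
    · rwa [hxO, norm_zero]
    · have hle := (hsupp _ (norm_smul_inv_norm (𝕜 := ℝ) hxO)).2 ⟨x, hx, rfl⟩
      have hxO' : ⟪‖x - O‖⁻¹ • (x - O), x - O⟫ = ‖x - O‖ := by
        rw [real_inner_smul_left, real_inner_self_eq_norm_mul_norm, ← mul_assoc,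
          inv_mul_cancel₀ (norm_ne_zero_iff.2 hxO), one_mul]
      rw [← hxO', inner_sub_right]
      simp only [RCLike.ofReal_real_eq_id, id] at hle
      linarith
  · intro y hy
    by_contra hyC
    obtain ⟨f, u, hfC, hfy⟩ := geometric_hahn_banach_closed_point hconv hC hyC
    set v := (InnerProductSpace.toDual ℝ F).symm f
    have hv (z : F) : ⟪v, z⟫ = f z := InnerProductSpace.toDual_symm_apply
    have hv0 : v ≠ 0 := by
      rintro hv0
      obtain ⟨P, hP⟩ := hne
      have := (hfC P hP).trans hfy
      rw [← hv, ← hv, hv0, inner_zero_left, inner_zero_left] at this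
      exact this.false
    have hvn : ‖‖v‖⁻¹ • v‖ = 1 := norm_smul_inv_norm (𝕜 := ℝ) hv0
    obtain ⟨P, hP, hPO⟩ := (hsupp _ hvn).1
    have hPy : ‖v‖⁻¹ * f P < ‖v‖⁻¹ * f y :=
      mul_lt_mul_of_pos_left ((hfC P hP).trans hfy) (inv_pos.2 (norm_pos_iff.2 hv0))
    have hyO : ⟪‖v‖⁻¹ • v, y - O⟫ ≤ ‖y - O‖ := by
      simpa [hvn] using real_inner_le_norm (‖v‖⁻¹ • v) (y - O)
    simp only [real_inner_smul_left, hv] at hPO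
    rw [inner_sub_right, real_inner_smul_left, real_inner_smul_left, hv, hv] at hyO
    rw [Metric.mem_closedBall, dist_eq_norm] at hy
    linarith

end Ball

def AllCapsIsosceles (C : Set (EuclideanSpace ℝ (Fin 2))) : Prop :=
  ∀ S P Q, S ∉ C → IsTangentAt C S P → IsTangentAt C S Q → dist S P = dist S Q

namespace AllCapsIsosceles

variable {C : Set (EuclideanSpace ℝ (Fin 2))}

theorem eq_of_isMaxOn (hC : AllCapsIsosceles C) (hb : Bornology.IsBounded C)
    {f : EuclideanSpace ℝ (Fin 2) →ₗ[ℝ] ℝ} (hf : f ≠ 0) {P Q : EuclideanSpace ℝ (Fin 2)}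
    (hP : P ∈ C) (hQ : Q ∈ C) (hPm : IsMaxOn f C P) (hQm : IsMaxOn f C Q) : P = Q := by
  by_contra hPQ
  have hd : 0 < ‖Q - P‖ := norm_pos_iff.2 (sub_ne_zero.2 (Ne.symm hPQ))
  obtain ⟨T, hT, hS⟩ : ∃ T : ℝ, 0 < T ∧ Q + T • (Q - P) ∉ C := by
    by_contra! h
    set T := (Metric.diam C + 1) / ‖Q - P‖
    have hT : 0 < T := div_pos (by linarith [Metric.diam_nonneg (s := C)]) hd
    have := Metric.dist_le_diam_of_mem hb (h T hT) hQ
    rw [dist_eq_norm, add_sub_cancel_left, norm_smul, Real.norm_of_nonneg hT.le,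
      div_mul_cancel₀ _ hd.ne'] at this
    linarith
  have hfPQ : f P = f Q := le_antisymm (hQm hP) (hPm hQ)
  have hfS : f (Q + T • (Q - P)) = f Q := by simp [hfPQ]
  have hdist := hC _ P Q hS ⟨hP, f, hf, hfS.trans hfPQ.symm, fun x hx => hPm hx⟩
    ⟨hQ, f, hf, hfS, fun x hx => hQm hx⟩
  rw [dist_eq_norm, dist_eq_norm, add_sub_cancel_left,
    show Q + T • (Q - P) - P = (1 + T) • (Q - P) by module, norm_smul, norm_smul,
    Real.norm_of_nonneg hT.le, Real.norm_of_nonneg (by linarith)] at hdist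
  nlinarith

theorem inner_add_sub_eq_zero (hC : AllCapsIsosceles C) (hb : Bornology.IsBounded C)
    {u v : EuclideanSpace ℝ (Fin 2)} (hu : ‖u‖ = 1) (hv : ‖v‖ = 1)
    {P Q : EuclideanSpace ℝ (Fin 2)} (hP : P ∈ C) (hQ : Q ∈ C)
    (hPm : IsMaxOn (⟪u, ·⟫) C P) (hQm : IsMaxOn (⟪v, ·⟫) C Q) :
    ⟪u + v, P - Q⟫ = 0 := by
  have : Fact (Module.finrank ℝ (EuclideanSpace ℝ (Fin 2)) = 2) := ⟨finrank_euclideanSpace_fin⟩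
  by_cases huv : ⟪u, v⟫ ^ 2 = ‖u‖ ^ 2 * ‖v‖ ^ 2
  · rw [hu, hv, one_pow, one_mul, sq_eq_one_iff, inner_eq_one_iff_of_norm_eq_one hu hv,
      inner_eq_neg_one_iff_of_norm_eq_one hu hv] at huv
    rcases huv with rfl | rfl
    · have hPQ : ⟪u, P⟫ = ⟪u, Q⟫ := le_antisymm (hQm hP) (hPm hQ)
      rw [inner_add_left, inner_sub_right, hPQ, sub_self, add_zero]
    · rw [neg_add_cancel, inner_zero_left]
  obtain ⟨S, hSP, hSQ⟩ := exists_inner_sub_eq_zero_and_inner_sub_eq_zero huv P Q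
  have hSP' : ⟪u, S⟫ = ⟪u, P⟫ := by rwa [inner_sub_right, sub_eq_zero] at hSP
  have hSQ' : ⟪v, S⟫ = ⟪v, Q⟫ := by rwa [inner_sub_right, sub_eq_zero] at hSQ
  have hu0 : innerₛₗ ℝ u ≠ 0 := fun h => by simpa [hu] using congr($h u)
  have hv0 : innerₛₗ ℝ v ≠ 0 := fun h => by simpa [hv] using congr($h v)
  by_cases hS : S ∈ C
  · have hSP := hC.eq_of_isMaxOn hb hu0 hS hP (fun x hx => by simpa [hSP'] using hPm hx) hPm
    have hSQ := hC.eq_of_isMaxOn hb hv0 hS hQ (fun x hx => by simpa [hSQ'] using hQm hx) hQm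
    rw [← hSP, ← hSQ, sub_self, inner_zero_right]
  have hdist : ‖S - P‖ = ‖S - Q‖ := by
    simpa only [dist_eq_norm] using hC S P Q hS
      ⟨hP, innerₛₗ ℝ u, hu0, by simpa using hSP', fun x hx => by simpa using hPm hx⟩
      ⟨hQ, innerₛₗ ℝ v, hv0, by simpa using hSQ', fun x hx => by simpa using hQm hx⟩
  have hsq : ⟪v, S - P⟫ ^ 2 = ⟪u, S - Q⟫ ^ 2 := by
    rw [inner_sq_eq_of_inner_eq_zero hu hSP, inner_sq_eq_of_inner_eq_zero hv hSQ, hdist, hu, hv,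
      real_inner_comm]
  have hPv : ⟪v, P⟫ ≤ ⟪v, Q⟫ := hQm hP
  have hQu : ⟪u, Q⟫ ≤ ⟪u, P⟫ := hPm hQ
  rw [sq_eq_sq₀ (by rw [inner_sub_right]; linarith) (by rw [inner_sub_right]; linarith)] at hsq
  rw [inner_sub_right, inner_sub_right] at hsq
  rw [inner_add_left, inner_sub_right, inner_sub_right]
  linarith

theorem exists_eq_closedBall (hC : AllCapsIsosceles C) (hcomp : IsCompact C) (hconv : Convex ℝ C)
    (hne : C.Nonempty) : ∃ O r, C = Metric.closedBall O r := by
  have hcont (ν : EuclideanSpace ℝ (Fin 2)) : ContinuousOn (⟪ν, ·⟫) C :=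
    (continuous_const.inner continuous_id).continuousOn
  set e : EuclideanSpace ℝ (Fin 2) := EuclideanSpace.single 0 1
  have he : ‖e‖ = 1 := by simp [e]
  obtain ⟨A, hA, hAm⟩ := hcomp.exists_isMaxOn hne (hcont e)
  obtain ⟨B, hB, hBm⟩ := hcomp.exists_isMaxOn hne (hcont (-e))
  have hAB : ⟪e, B⟫ ≤ ⟪e, A⟫ := hAm hB
  refine ⟨midpoint ℝ A B, ⟪e, A - B⟫ / 2, eq_closedBall_of_isGreatest_inner hcomp.isClosed hconv
    hne (by rw [inner_sub_right]; linarith) fun ν hν => ?_⟩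
  obtain ⟨P, hP, hPm⟩ := hcomp.exists_isMaxOn hne (hcont ν)
  have hPA := hC.inner_add_sub_eq_zero hcomp.isBounded hν he hP hA hPm hAm
  have hPB := hC.inner_add_sub_eq_zero hcomp.isBounded hν (by rwa [norm_neg]) hP hB hPm hBm
  have hPO : ⟪ν, P⟫ = ⟪ν, midpoint ℝ A B⟫ + ⟪e, A - B⟫ / 2 := by
    rw [midpoint_eq_smul_add, invOf_eq_inv, real_inner_smul_right]
    simp only [inner_add_left, inner_add_right, inner_sub_right, inner_neg_left] at hPA hPB ⊢
    linarith
  exact ⟨⟨P, hP, hPO⟩, Set.forall_mem_image.2 fun x hx => hPO ▸ hPm hx⟩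

end AllCapsIsosceles

theorem non_disc_has_non_isosceles_cap_general
    (C : Set (EuclideanSpace ℝ (Fin 2)))
    (hcomp : IsCompact C) (hconv : Convex ℝ C)
    (hnotdisc : ∀ (O : EuclideanSpace ℝ (Fin 2)) (r : ℝ),
      C ≠ Metric.closedBall O r) :
    ∃ (S P Q : EuclideanSpace ℝ (Fin 2)), S ∉ C ∧
      IsTangentAt C S P ∧ IsTangentAt C S Q ∧ dist S P ≠ dist S Q := by
  by_contra! hiso
  rcases C.eq_empty_or_nonempty with rfl | hne
  · exact hnotdisc 0 (-1) (Metric.closedBall_eq_empty.2 (by norm_num)).symm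
  obtain ⟨O, r, hOr⟩ := AllCapsIsosceles.exists_eq_closedBall hiso hcomp hconv hne
  exact hnotdisc O r hOr

/-- A compact convex body in the plane that is not a circular disc has a
non-isosceles cap. -/
theorem non_disc_has_non_isosceles_cap
    (C : Set (EuclideanSpace ℝ (Fin 2)))
    (hcomp : IsCompact C) (hconv : Convex ℝ C)
    (hint : (interior C).Nonempty)
    (hnotdisc : ∀ (O : EuclideanSpace ℝ (Fin 2)) (r : ℝ),
      C ≠ Metric.closedBall O r) :
    ∃ (S P Q : EuclideanSpace ℝ (Fin 2)), S ∉ C ∧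
      IsTangentAt C S P ∧ IsTangentAt C S Q ∧ dist S P ≠ dist S Q :=
  non_disc_has_non_isosceles_cap_general C hcomp hconv hnotdisc
end

section
/- Let C1 and C2 be two disjoint closed circular discs on the unit sphere, each of radius less than π/2. Then there exists a great circle on the sphere that separates them: the two discs lie in the two distinct closed hemispheres determined by the great circle. -/
/-!
Measure spherical distance by the unoriented angle between vectors. If the discs are disjoint,
their centres `o₁, o₂` are more than `r₁ + r₂` apart: otherwise the point of the great-circle arc
from `o₁` to `o₂` at distance `r₁` from `o₁` lies in both discs. Now let `v` be the point of that
great circle at distance `π/2 - r₁` from `o₁`, on the side away from `o₂`; it is at distance at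
least `π/2 + r₂` from `o₂` (when `o₂` is too close to `-o₁` for this, take `v = -o₂` instead).
By the triangle inequality for angles, every point of the first disc is within `π/2` of `v` and
every point of the second disc is within `π/2` of `-v`.
-/

open scoped RealInnerProductSpace

open Real InnerProductGeometry

variable {V : Type*} [NormedAddCommGroup V] [InnerProductSpace ℝ V]

lemma arccos_inner_eq_angle {x y : V} (hx : ‖x‖ = 1) (hy : ‖y‖ = 1) :
    arccos ⟪x, y⟫ = angle x y := by
  simp [angle, hx, hy]

lemma inner_nonneg_of_angle_le_pi_div_two {x y : V} (h : angle x y ≤ π / 2) : 0 ≤ ⟪x, y⟫ := by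
  rw [← cos_angle_mul_norm_mul_norm]
  have hcos : 0 ≤ cos (angle x y) :=
    cos_nonneg_of_neg_pi_div_two_le_of_le (by linarith [angle_nonneg x y, pi_pos]) h
  positivity

noncomputable def greatCircle (x u : V) (t : ℝ) : V := cos t • x + sin t • u

section greatCircle

variable {x u : V}

lemma greatCircle_zero (x u : V) : greatCircle x u 0 = x := by
  simp [greatCircle]

lemma inner_greatCircle (hx : ‖x‖ = 1) (hu : ‖u‖ = 1) (hxu : ⟪x, u⟫ = 0) (s t : ℝ) :
    ⟪greatCircle x u s, greatCircle x u t⟫ = cos (s - t) := by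
  simp only [greatCircle, inner_add_left, inner_add_right, real_inner_smul_left,
    real_inner_smul_right, real_inner_self_eq_norm_sq, hx, hu, hxu, real_inner_comm x u, cos_sub]
  ring

lemma norm_greatCircle (hx : ‖x‖ = 1) (hu : ‖u‖ = 1) (hxu : ⟪x, u⟫ = 0) (t : ℝ) :
    ‖greatCircle x u t‖ = 1 := by
  have h := inner_greatCircle hx hu hxu t t
  rwa [sub_self, cos_zero, real_inner_self_eq_norm_sq,
    pow_eq_one_iff_of_nonneg (norm_nonneg _) two_ne_zero] at h

lemma angle_greatCircle (hx : ‖x‖ = 1) (hu : ‖u‖ = 1) (hxu : ⟪x, u⟫ = 0) {s t : ℝ}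
    (h : |s - t| ≤ π) : angle (greatCircle x u s) (greatCircle x u t) = |s - t| := by
  rw [← arccos_inner_eq_angle (norm_greatCircle hx hu hxu s) (norm_greatCircle hx hu hxu t),
    inner_greatCircle hx hu hxu, ← cos_abs, arccos_cos (abs_nonneg _) h]

lemma angle_greatCircle_left (hx : ‖x‖ = 1) (hu : ‖u‖ = 1) (hxu : ⟪x, u⟫ = 0) {t : ℝ}
    (h : |t| ≤ π) : angle (greatCircle x u t) x = |t| := by
  simpa only [greatCircle_zero, sub_zero] using
    angle_greatCircle hx hu hxu (s := t) (t := 0) (by rwa [sub_zero])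

end greatCircle

lemma exists_greatCircle_angle_eq {x y : V} (hx : ‖x‖ = 1) (hy : ‖y‖ = 1)
    (h₀ : 0 < angle x y) (hπ : angle x y < π) :
    ∃ u : V, ‖u‖ = 1 ∧ ⟪x, u⟫ = 0 ∧ greatCircle x u (angle x y) = y := by
  set θ := angle x y
  have hsin : 0 < sin θ := sin_pos_of_pos_of_lt_pi h₀ hπ
  have hcos : ⟪x, y⟫ = cos θ := inner_eq_cos_angle_of_norm_eq_one hx hy
  have hxx : ⟪x, x⟫ = 1 := by rw [real_inner_self_eq_norm_sq, hx, one_pow]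
  refine ⟨(sin θ)⁻¹ • (y - cos θ • x), ?_, ?_, ?_⟩
  · have hyy : ⟪y, y⟫ = 1 := by rw [real_inner_self_eq_norm_sq, hy, one_pow]
    rw [← pow_eq_one_iff_of_nonneg (norm_nonneg _) two_ne_zero, ← real_inner_self_eq_norm_sq]
    simp only [real_inner_smul_left, real_inner_smul_right, inner_sub_left, inner_sub_right,
      hxx, hyy, hcos, real_inner_comm x y]
    field_simp
    linear_combination -sin_sq_add_cos_sq θ
  · rw [real_inner_smul_right, inner_sub_right, real_inner_smul_right, hxx, hcos, mul_one,
      sub_self, mul_zero]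
  · rw [greatCircle, smul_smul, mul_inv_cancel₀ hsin.ne', one_smul, add_sub_cancel]

def sphericalDisc (o : V) (r : ℝ) : Set V := {x | ‖x‖ = 1 ∧ arccos ⟪x, o⟫ ≤ r}

lemma mem_sphericalDisc_iff {o x : V} {r : ℝ} (ho : ‖o‖ = 1) :
    x ∈ sphericalDisc o r ↔ ‖x‖ = 1 ∧ angle x o ≤ r :=
  and_congr_right fun hx => by rw [arccos_inner_eq_angle hx ho]

lemma inner_nonneg_of_mem_sphericalDisc {o v x : V} {r : ℝ} (ho : ‖o‖ = 1)
    (hv : angle v o ≤ π / 2 - r) (hx : x ∈ sphericalDisc o r) : 0 ≤ ⟪v, x⟫ := by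
  have hxo : angle o x ≤ r := angle_comm x o ▸ ((mem_sphericalDisc_iff ho).1 hx).2
  exact inner_nonneg_of_angle_le_pi_div_two <| by linarith [angle_le_angle_add_angle v o x]

lemma add_lt_angle_of_disjoint_sphericalDisc {o₁ o₂ : V} {r₁ r₂ : ℝ} (h₁ : ‖o₁‖ = 1)
    (h₂ : ‖o₂‖ = 1) (hr₁ : 0 ≤ r₁) (hr₂ : 0 ≤ r₂) (hr : r₁ + r₂ < π)
    (hdisj : Disjoint (sphericalDisc o₁ r₁) (sphericalDisc o₂ r₂)) :
    r₁ + r₂ < angle o₁ o₂ := by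
  by_contra! hθ
  refine Set.not_disjoint_iff.2 ?_ hdisj
  simp only [mem_sphericalDisc_iff h₁, mem_sphericalDisc_iff h₂]
  rcases le_or_gt (angle o₁ o₂) r₁ with hθ₁ | hθ₁
  · have ho₂ : o₂ ≠ 0 := by rintro rfl; simp at h₂
    exact ⟨o₂, ⟨h₂, angle_comm o₂ o₁ ▸ hθ₁⟩, h₂, (angle_self ho₂).trans_le hr₂⟩
  obtain ⟨u, hu, hxu, hγ⟩ := exists_greatCircle_angle_eq h₁ h₂ (hr₁.trans_lt hθ₁) (by linarith)
  have hx := norm_greatCircle h₁ hu hxu r₁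
  refine ⟨greatCircle o₁ u r₁, ⟨hx, ?_⟩, hx, ?_⟩
  · rw [angle_greatCircle_left h₁ hu hxu (by rw [abs_of_nonneg hr₁]; linarith),
      abs_of_nonneg hr₁]
  · have hdist : |r₁ - angle o₁ o₂| = angle o₁ o₂ - r₁ := by
      rw [abs_of_nonpos (by linarith), neg_sub]
    rw [← hγ, angle_greatCircle h₁ hu hxu (by rw [hdist]; linarith), hdist]
    linarith

lemma exists_angle_le_of_add_lt_angle {o₁ o₂ : V} {r₁ r₂ : ℝ} (h₁ : ‖o₁‖ = 1) (h₂ : ‖o₂‖ = 1)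
    (hr₁ : 0 ≤ r₁) (hr₁' : r₁ < π / 2) (hr₂ : 0 ≤ r₂) (hr₂' : r₂ ≤ π / 2)
    (h : r₁ + r₂ < angle o₁ o₂) :
    ∃ v : V, v ≠ 0 ∧ angle v o₁ ≤ π / 2 - r₁ ∧ angle (-v) o₂ ≤ π / 2 - r₂ := by
  rcases lt_or_ge (π / 2 + r₁) (angle o₁ o₂) with hθ | hθ
  · have ho₂ : o₂ ≠ 0 := by rintro rfl; simp at h₂
    refine ⟨-o₂, neg_ne_zero.2 ho₂, ?_, ?_⟩
    · rw [angle_neg_left, angle_comm]; linarith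
    · rw [neg_neg, angle_self ho₂]; linarith
  obtain ⟨u, hu, hxu, hγ⟩ := exists_greatCircle_angle_eq h₁ h₂ (by linarith) (by linarith)
  have hv := norm_greatCircle h₁ hu hxu (r₁ - π / 2)
  refine ⟨greatCircle o₁ u (r₁ - π / 2), by rintro h0; simp [h0] at hv, ?_, ?_⟩
  · have hdist : |r₁ - π / 2| = π / 2 - r₁ := by rw [abs_of_nonpos (by linarith), neg_sub]
    rw [angle_greatCircle_left h₁ hu hxu (by rw [hdist]; linarith), hdist]
  · have hdist : |r₁ - π / 2 - angle o₁ o₂| = angle o₁ o₂ + π / 2 - r₁ := by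
      rw [abs_of_nonpos (by linarith)]; ring
    rw [angle_neg_left, ← hγ, angle_greatCircle h₁ hu hxu (by rw [hdist]; linarith), hdist]
    linarith

/-- Two disjoint closed circular discs on the unit sphere in `ℝ³`, each of
radius less than `π/2`, can be separated by a great circle: they lie in the
two distinct closed hemispheres it determines. -/
theorem sphere_discs_separated_by_great_circle
    (O1 O2 : EuclideanSpace ℝ (Fin 3)) (r1 r2 : ℝ)
    (hO1 : ‖O1‖ = 1) (hO2 : ‖O2‖ = 1)
    (hr1 : r1 ∈ Set.Ioo 0 (Real.pi / 2)) (hr2 : r2 ∈ Set.Ioo 0 (Real.pi / 2))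
    (hdisj : Disjoint
      {X : EuclideanSpace ℝ (Fin 3) | ‖X‖ = 1 ∧ Real.arccos ⟪X, O1⟫ ≤ r1}
      {X : EuclideanSpace ℝ (Fin 3) | ‖X‖ = 1 ∧ Real.arccos ⟪X, O2⟫ ≤ r2}) :
    ∃ v : EuclideanSpace ℝ (Fin 3), v ≠ 0 ∧
      (∀ X : EuclideanSpace ℝ (Fin 3),
        ‖X‖ = 1 → Real.arccos ⟪X, O1⟫ ≤ r1 → 0 ≤ ⟪v, X⟫) ∧
      (∀ X : EuclideanSpace ℝ (Fin 3),
        ‖X‖ = 1 → Real.arccos ⟪X, O2⟫ ≤ r2 → ⟪v, X⟫ ≤ 0) := by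
  obtain ⟨hr1₀, hr1⟩ := hr1
  obtain ⟨hr2₀, hr2⟩ := hr2
  have hθ : r1 + r2 < angle O1 O2 :=
    add_lt_angle_of_disjoint_sphericalDisc hO1 hO2 hr1₀.le hr2₀.le (by linarith) hdisj
  obtain ⟨v, hv, hv1, hv2⟩ :=
    exists_angle_le_of_add_lt_angle hO1 hO2 hr1₀.le hr1 hr2₀.le hr2.le hθ
  refine ⟨v, hv, fun X hX hXO => ?_, fun X hX hXO => ?_⟩
  · exact inner_nonneg_of_mem_sphericalDisc hO1 hv1 ⟨hX, hXO⟩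
  · simpa using inner_nonneg_of_mem_sphericalDisc hO2 hv2 ⟨hX, hXO⟩
end

section
/- Let finitely many pairwise disjoint closed circular discs be given in the Euclidean plane. Then for each disc D_i there exists a convex polygon (intersection of finitely many closed half-planes) P_i containing D_i such that the interiors of the P_i are pairwise disjoint and the P_i cover the plane; explicitly, taking P_i to be the set of points whose power with respect to disc D_i is at most their power with respect to every other disc works. -/
open Metric RealInnerProductSpace

private lemma power_diff_aux (O₁ O₂ A : EuclideanSpace ℝ (Fin 2)) :
    dist A O₁ ^ 2 - dist A O₂ ^ 2
      = (‖O₁‖ ^ 2 - ‖O₂‖ ^ 2) - 2 * ⟪A, O₁ - O₂⟫ := by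
  rw [dist_eq_norm, dist_eq_norm, norm_sub_sq_real, norm_sub_sq_real, inner_sub_right]
  ring

/-- The power-diagram cells of a finite family of pairwise disjoint closed
discs in the plane form a separating polygonal tiling: each cell is convex,
contains its disc, the cells cover the plane, and distinct cells have
disjoint interiors. -/
theorem power_diagram_separates_discs
    {ι : Type*} [Fintype ι] [Nonempty ι]
    (O : ι → EuclideanSpace ℝ (Fin 2)) (r : ι → ℝ) (hr : ∀ i, 0 < r i)
    (hdisj : Pairwise fun i j =>
      Disjoint (closedBall (O i) (r i)) (closedBall (O j) (r j))) :
    (∀ i, Convex ℝ {A : EuclideanSpace ℝ (Fin 2) |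
        ∀ j, dist A (O i) ^ 2 - r i ^ 2 ≤ dist A (O j) ^ 2 - r j ^ 2}) ∧
    (∀ i, closedBall (O i) (r i) ⊆ {A : EuclideanSpace ℝ (Fin 2) |
        ∀ j, dist A (O i) ^ 2 - r i ^ 2 ≤ dist A (O j) ^ 2 - r j ^ 2}) ∧
    (⋃ i, {A : EuclideanSpace ℝ (Fin 2) |
        ∀ j, dist A (O i) ^ 2 - r i ^ 2 ≤ dist A (O j) ^ 2 - r j ^ 2})
      = Set.univ ∧
    (Pairwise fun i j =>
      Disjoint
        (interior {A : EuclideanSpace ℝ (Fin 2) |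
          ∀ k, dist A (O i) ^ 2 - r i ^ 2 ≤ dist A (O k) ^ 2 - r k ^ 2})
        (interior {A : EuclideanSpace ℝ (Fin 2) |
          ∀ k, dist A (O j) ^ 2 - r j ^ 2 ≤ dist A (O k) ^ 2 - r k ^ 2})) := by
  refine ⟨fun i => ?_, fun i A hA j => ?_, ?_, fun i j hij => ?_⟩
  · -- convexity
    have hset : {A : EuclideanSpace ℝ (Fin 2) |
        ∀ j, dist A (O i) ^ 2 - r i ^ 2 ≤ dist A (O j) ^ 2 - r j ^ 2}
        = ⋂ j, {A : EuclideanSpace ℝ (Fin 2) |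
            (‖O i‖ ^ 2 - ‖O j‖ ^ 2 - r i ^ 2 + r j ^ 2) / 2 ≤ ⟪A, O i - O j⟫} := by
      ext A
      simp only [Set.mem_iInter, Set.mem_setOf_eq]
      refine forall_congr' fun j => ?_
      have := power_diff_aux (O i) (O j) A
      constructor <;> intro h <;> linarith
    rw [hset]
    refine convex_iInter fun j => convex_halfSpace_ge ?_ _
    exact ⟨fun x y => inner_add_left x y _, fun c x => real_inner_smul_left x _ c⟩
  · -- discs contained in cells
    rcases eq_or_ne j i with rfl | hne
    · exact le_refl _
    have h1 : dist A (O i) ≤ r i := mem_closedBall.mp hA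
    have h2 : A ∉ closedBall (O j) (r j) :=
      fun hmem => Set.disjoint_left.mp (hdisj fun e => hne e.symm) hA hmem
    have h3 : r j < dist A (O j) := by simpa [mem_closedBall, not_le] using h2
    have h4 : (0:ℝ) ≤ dist A (O i) := dist_nonneg
    have h5 : (0:ℝ) < r j := hr j
    nlinarith
  · -- covering
    ext A
    simp only [Set.mem_iUnion, Set.mem_univ, iff_true, Set.mem_setOf_eq]
    obtain ⟨i, -, hi⟩ := Finset.exists_min_image Finset.univ
      (fun i => dist A (O i) ^ 2 - r i ^ 2) ⟨Classical.arbitrary ι, Finset.mem_univ _⟩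
    exact ⟨i, fun j => hi j (Finset.mem_univ j)⟩
  · -- disjoint interiors
    dsimp only
    rw [Set.disjoint_left]
    intro A hAi hAj
    have hAi' := interior_subset hAi
    have hAj' := interior_subset hAj
    have heq : dist A (O i) ^ 2 - r i ^ 2 = dist A (O j) ^ 2 - r j ^ 2 :=
      le_antisymm (hAi' j) (hAj' i)
    have hO : O i ≠ O j := by
      intro h
      exact Set.disjoint_left.mp (hdisj hij) (mem_closedBall_self (hr i).le)
        (by rw [h]; exact mem_closedBall_self (hr j).le)
    have hnorm : 0 < ‖O i - O j‖ := by rwa [norm_pos_iff, sub_ne_zero]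
    obtain ⟨ε, hε, hball⟩ := Metric.isOpen_iff.mp isOpen_interior A hAi
    set t : ℝ := ε / (2 * ‖O i - O j‖) with ht
    have htpos : 0 < t := div_pos hε (by positivity)
    set B := A + t • (O j - O i) with hB
    have hBmem : B ∈ ball A ε := by
      rw [mem_ball, dist_eq_norm]
      have hBA : B - A = t • (O j - O i) := by rw [hB]; abel
      rw [hBA, norm_smul, Real.norm_of_nonneg htpos.le, norm_sub_rev]
      rw [ht, div_mul_eq_mul_div, div_lt_iff₀ (by positivity)]
      nlinarith
    have hle := (interior_subset (hball hBmem)) j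
    have e1 := power_diff_aux (O i) (O j) A
    have e2 := power_diff_aux (O i) (O j) B
    have hin : ⟪B, O i - O j⟫ = ⟪A, O i - O j⟫ - t * ‖O i - O j‖ ^ 2 := by
      rw [hB, inner_add_left, real_inner_smul_left]
      have h1 : O j - O i = -(O i - O j) := by abel
      rw [h1, inner_neg_left, real_inner_self_eq_norm_sq]
      ring
    have hpos : 0 < t * ‖O i - O j‖ ^ 2 := mul_pos htpos (pow_pos hnorm 2)
    linarith
end
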